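/- arXiv:1809.04275 — 4 statements merged into one kernel-verified Lean document; each statement's English description precedes it below -/
import Mathlib

section
/- (Deviation bound for nilpotent traceless Gaussian quadratic forms.) Let d ≥ 1 be an integer, let v be a random vector in ℝ^d with i.i.d. standard normal components, and let A be a (not necessarily symmetric) d×d real matrix with trace(A) = 0 and A·A = 0 (the zero matrix). For every ε > 0: if the largest eigenvalue of A + A' is positive, then P( |v'Av| ≥ ε ) ≤ 4·exp( −(d/2)·G(d·√(λ_d(A'A)/2), ε/2) ), where λ_d(A'A) is the largest eigenvalue of A'A and G(x,y) = y/x − log((x+y)/x); and if the largest eigenvalue of A + A' is 0, then P( |v'Av| ≥ ε ) = 0. -/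
open Matrix MeasureTheory ProbabilityTheory

namespace Stmt11

/-- The rate function `G(x,y) = y/x - log((x+y)/x)`. -/
noncomputable def G (x y : ℝ) : ℝ := y / x - Real.log ((x + y) / x)

/-!
Write `vᵀAv = ½ vᵀ(A + Aᵀ)v`. The standard Gaussian measure is invariant under orthogonal
changes of coordinates, so expanding `v` in an orthonormal eigenbasis of `A + Aᵀ` (eigenvalues
`μᵢ`) shows that `vᵀAv` has the law of `∑ (μᵢ/2)(gᵢ² - 1)` with `gᵢ` i.i.d. standard normal; the
centring is free because `∑ μᵢ = tr (A + Aᵀ) = 0`. If `(A + Aᵀ)u = μu` with `μ ≠ 0`, then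
`A² = 0` forces `AᵀA (Aᵀu) = μ² Aᵀu` with `Aᵀu ≠ 0`, hence `|μᵢ| ≤ √λ_d(AᵀA)`. Each tail then
follows from a Chernoff bound: the cumulant generating function `-a - log (1 - 2a) / 2` of
`g² - 1` is largest at `b` on `[-b, b]`. When `λ_d(A + Aᵀ) = 0` all `μᵢ` vanish, being
nonpositive with sum zero, so `vᵀAv = 0`.
-/

open Real

lemma two_mul_le_log_one_add_sub_log_one_sub {s : ℝ} (h0 : 0 ≤ s) (h1 : s < 1) :
    2 * s ≤ log (1 + s) - log (1 - s) := by
  have hs := hasSum_log_sub_log_of_abs_lt_one (by rwa [abs_of_nonneg h0])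
  simpa using sum_le_hasSum (Finset.range 1) (fun k _ => by positivity) hs

noncomputable def centeredChiSqCgf (a : ℝ) : ℝ := -a - log (1 - 2 * a) / 2

lemma centeredChiSqCgf_le_of_le {a b : ℝ} (ha : 0 ≤ a) (hab : a ≤ b) (hb : b < 1 / 2) :
    centeredChiSqCgf a ≤ centeredChiSqCgf b := by
  have h2a : 0 < 1 - 2 * a := by linarith
  have h2b : 0 < 1 - 2 * b := by linarith
  have hlog := one_sub_inv_le_log_of_pos (div_pos h2a h2b)
  rw [inv_div, log_div h2a.ne' h2b.ne'] at hlog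
  have hfrac : 2 * (b - a) ≤ 1 - (1 - 2 * b) / (1 - 2 * a) := by
    rw [le_sub_iff_add_le, ← le_sub_iff_add_le', div_le_iff₀ h2a]
    nlinarith
  unfold centeredChiSqCgf
  linarith

lemma centeredChiSqCgf_neg_le {a : ℝ} (ha : 0 ≤ a) (ha' : a < 1 / 2) :
    centeredChiSqCgf (-a) ≤ centeredChiSqCgf a := by
  have h := two_mul_le_log_one_add_sub_log_one_sub (s := 2 * a) (by linarith) (by linarith)
  unfold centeredChiSqCgf
  rw [show 1 - 2 * -a = 1 + 2 * a by ring]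
  linarith

lemma centeredChiSqCgf_le_of_abs_le {a b : ℝ} (hab : |a| ≤ b) (hb : b < 1 / 2) :
    centeredChiSqCgf a ≤ centeredChiSqCgf b := by
  rcases le_total 0 a with ha | ha
  · exact centeredChiSqCgf_le_of_le ha (le_of_abs_le hab) hb
  · rw [abs_of_nonpos ha] at hab
    calc centeredChiSqCgf a = centeredChiSqCgf (-(-a)) := by rw [neg_neg]
      _ ≤ centeredChiSqCgf (-a) := centeredChiSqCgf_neg_le (by linarith) (by linarith)
      _ ≤ centeredChiSqCgf b := centeredChiSqCgf_le_of_le (by linarith) hab hb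

lemma integral_exp_mul_sq_sub_one_gaussianReal {a : ℝ} (ha : a < 1 / 2) :
    ∫ x, exp (a * (x ^ 2 - 1)) ∂gaussianReal 0 1 = exp (centeredChiSqCgf a) := by
  have h2a : 0 < 1 - 2 * a := by linarith
  have hdensity : ∀ x : ℝ, gaussianPDFReal 0 1 x • exp (a * (x ^ 2 - 1)) =
      ((√(2 * π))⁻¹ * exp (-a)) * exp (-(1 / 2 - a) * x ^ 2) := by
    intro x
    simp only [gaussianPDFReal_def, smul_eq_mul, NNReal.coe_one, mul_one, sub_zero]
    rw [mul_assoc, mul_assoc, ← exp_add, ← exp_add]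
    ring_nf
  have hsqrt : exp (log (1 - 2 * a) / 2) = √(1 - 2 * a) := by
    rw [sqrt_eq_rpow, rpow_def_of_pos h2a]
    ring_nf
  have hconst : (√(2 * π))⁻¹ * √(π / (1 / 2 - a)) = (√(1 - 2 * a))⁻¹ := by
    rw [← sqrt_inv, ← sqrt_inv, ← sqrt_mul (by positivity)]
    congr 1
    field_simp
  rw [integral_gaussianReal_eq_integral_smul one_ne_zero]
  simp_rw [hdensity]
  rw [integral_const_mul, integral_gaussian, centeredChiSqCgf, exp_sub, hsqrt,
    div_eq_mul_inv (exp (-a)), ← hconst]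
  ring

lemma chernoff_exponent_le_G {n b x u : ℝ} (hb : 0 < b) (hx : 0 < x) (hu : 0 < u)
    (hnb : n * b ≤ 2 * x) :
    -(u / (x + u) / (2 * b)) * (2 * u) + n * centeredChiSqCgf (u / (x + u) / 2) ≤
      -(n / 2) * G x u := by
  have hxu : 0 < x + u := by linarith
  have hlog : log (1 - 2 * (u / (x + u) / 2)) = -log ((x + u) / x) := by
    rw [← log_inv, inv_div]
    congr 1
    field_simp
    ring
  have hgap : u / (x + u) / (2 * b) * (2 * u) + n * (u / (x + u) / 2) - n / 2 * (u / x) =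
      u ^ 2 * (2 * x - n * b) / (2 * b * x * (x + u)) := by
    field_simp
    ring
  have hgap_nonneg : 0 ≤ u ^ 2 * (2 * x - n * b) / (2 * b * x * (x + u)) :=
    div_nonneg (mul_nonneg (sq_nonneg u) (by linarith)) (by positivity)
  unfold centeredChiSqCgf G
  rw [hlog]
  nlinarith

section WeightedChiSq

variable {ι : Type*} [Fintype ι]

lemma integral_exp_sum_mul_sq_sub_one_pi_gaussianReal {c : ι → ℝ} (hc : ∀ i, c i < 1 / 2) :
    ∫ y, exp (∑ i, c i * (y i ^ 2 - 1)) ∂(Measure.pi fun _ : ι => gaussianReal 0 1) =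
      exp (∑ i, centeredChiSqCgf (c i)) := by
  simp_rw [exp_sum]
  rw [integral_fintype_prod_eq_prod (f := fun i x => exp (c i * (x ^ 2 - 1)))]
  exact Finset.prod_congr rfl fun i _ => integral_exp_mul_sq_sub_one_gaussianReal (hc i)

lemma measureReal_sum_mul_sq_sub_one_ge_le {c : ι → ℝ} {t : ℝ} (ht : 0 ≤ t)
    (hc : ∀ i, t * c i < 1 / 2) (ε : ℝ) :
    (Measure.pi fun _ : ι => gaussianReal 0 1).real {y | ε ≤ ∑ i, c i * (y i ^ 2 - 1)} ≤
      exp (-t * ε + ∑ i, centeredChiSqCgf (t * c i)) := by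
  have hmgf : ∫ y, exp (t * ∑ i, c i * (y i ^ 2 - 1))
      ∂(Measure.pi fun _ : ι => gaussianReal 0 1) = exp (∑ i, centeredChiSqCgf (t * c i)) := by
    simp_rw [Finset.mul_sum, ← mul_assoc]
    exact integral_exp_sum_mul_sq_sub_one_pi_gaussianReal hc
  have hint : Integrable (fun y : ι → ℝ => exp (t * ∑ i, c i * (y i ^ 2 - 1)))
      (Measure.pi fun _ : ι => gaussianReal 0 1) :=
    -- the product formula behind `hmgf` holds without integrability, and its value is nonzero
    Integrable.of_integral_ne_zero (by rw [hmgf]; exact (exp_pos _).ne')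
  calc _ ≤ exp (-t * ε) * mgf (fun y => ∑ i, c i * (y i ^ 2 - 1))
        (Measure.pi fun _ : ι => gaussianReal 0 1) t :=
      measure_ge_le_exp_mul_mgf ε ht hint
    _ = _ := by rw [mgf, hmgf, exp_add]

lemma measure_sum_mul_sq_sub_one_ge_le_exp_G {c : ι → ℝ} {b x ε : ℝ} (hb : 0 < b)
    (hc : ∀ i, |c i| ≤ b) (hx : 0 < x) (hε : 0 < ε) (hnb : Fintype.card ι * b ≤ 2 * x) :
    (Measure.pi fun _ : ι => gaussianReal 0 1) {y | ε ≤ ∑ i, c i * (y i ^ 2 - 1)} ≤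
      ENNReal.ofReal (exp (-(Fintype.card ι / 2) * G x (ε / 2))) := by
  -- with `u = ε / 2`, `s = u / (x + u)` minimises the exponent once `b` is replaced by `2x / n`
  set s := ε / 2 / (x + ε / 2)
  have hs1 : s < 1 := (div_lt_one (by linarith)).mpr (by linarith)
  have hts : ∀ i, |s / (2 * b) * c i| ≤ s / 2 := fun i => by
    rw [abs_mul, abs_of_nonneg (by positivity)]
    calc s / (2 * b) * |c i| ≤ s / (2 * b) * b := by gcongr; exact hc i
      _ = s / 2 := by field_simp
  have hcgf : ∑ i, centeredChiSqCgf (s / (2 * b) * c i) ≤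
      Fintype.card ι * centeredChiSqCgf (s / 2) := by
    calc ∑ i, centeredChiSqCgf (s / (2 * b) * c i) ≤ ∑ _i : ι, centeredChiSqCgf (s / 2) :=
          Finset.sum_le_sum fun i _ => centeredChiSqCgf_le_of_abs_le (hts i) (by linarith)
      _ = _ := by simp
  rw [← ofReal_measureReal]
  refine ENNReal.ofReal_le_ofReal ((measureReal_sum_mul_sq_sub_one_ge_le (by positivity)
    (fun i => (le_abs_self _).trans_lt ((hts i).trans_lt (by linarith))) _).trans ?_)
  rw [exp_le_exp]
  linarith [chernoff_exponent_le_G hb hx (half_pos hε) hnb]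

lemma measure_abs_sum_mul_sq_sub_one_ge_le_exp_G {c : ι → ℝ} {b x ε : ℝ} (hb : 0 < b)
    (hc : ∀ i, |c i| ≤ b) (hx : 0 < x) (hε : 0 < ε) (hnb : Fintype.card ι * b ≤ 2 * x) :
    (Measure.pi fun _ : ι => gaussianReal 0 1) {y | ε ≤ |∑ i, c i * (y i ^ 2 - 1)|} ≤
      ENNReal.ofReal (2 * exp (-(Fintype.card ι / 2) * G x (ε / 2))) := by
  have hsplit : {y : ι → ℝ | ε ≤ |∑ i, c i * (y i ^ 2 - 1)|} ⊆
      {y | ε ≤ ∑ i, c i * (y i ^ 2 - 1)} ∪ {y | ε ≤ ∑ i, -c i * (y i ^ 2 - 1)} := by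
    intro y hy
    simp only [Set.mem_union, Set.mem_ofPred_eq, neg_mul, Finset.sum_neg_distrib]
    exact le_abs.mp hy
  have hneg : ∀ i, |-c i| ≤ b := fun i => (abs_neg (c i)).trans_le (hc i)
  calc _ ≤ _ := measure_mono hsplit
    _ ≤ _ := measure_union_le _ _
    _ ≤ _ := add_le_add (measure_sum_mul_sq_sub_one_ge_le_exp_G hb hc hx hε hnb)
        (measure_sum_mul_sq_sub_one_ge_le_exp_G hb hneg hx hε hnb)
    _ = _ := by rw [← ENNReal.ofReal_add (by positivity) (by positivity), two_mul]

end WeightedChiSq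

section LinearAlgebra

variable {n : Type*} [Fintype n]

lemma dotProduct_add_transpose_mulVec {R : Type*} [CommSemiring R] (A : Matrix n n R)
    (x : n → R) : x ⬝ᵥ ((A + Aᵀ) *ᵥ x) = 2 * (x ⬝ᵥ (A *ᵥ x)) := by
  rw [add_mulVec, dotProduct_add, mulVec_transpose, dotProduct_comm x (x ᵥ* A),
    ← dotProduct_mulVec, two_mul]

lemma transpose_mul_self_mulVec_transpose_mulVec {R : Type*} [CommRing R] {A : Matrix n n R}
    (hAA : A * A = 0) {μ : R} {u : n → R} (hu : (A + Aᵀ) *ᵥ u = μ • u) :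
    (Aᵀ * A) *ᵥ (Aᵀ *ᵥ u) = μ ^ 2 • (Aᵀ *ᵥ u) := by
  have hAAt : Aᵀ * Aᵀ = 0 := by rw [← transpose_mul, hAA, transpose_zero]
  have hAu : A *ᵥ u = μ • u - Aᵀ *ᵥ u := by rw [← hu, add_mulVec, add_sub_cancel_right]
  have hAtu : Aᵀ *ᵥ u = μ • u - A *ᵥ u := by rw [← hu, add_mulVec, add_sub_cancel_left]
  calc (Aᵀ * A) *ᵥ (Aᵀ *ᵥ u) = Aᵀ *ᵥ (A *ᵥ (Aᵀ *ᵥ u)) := (mulVec_mulVec _ _ _).symm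
    _ = Aᵀ *ᵥ (μ • A *ᵥ u) := by
      rw [hAtu, mulVec_sub, mulVec_smul, mulVec_mulVec, hAA, zero_mulVec, sub_zero]
    _ = μ ^ 2 • (Aᵀ *ᵥ u) := by
      rw [mulVec_smul, hAu, mulVec_sub, mulVec_smul, mulVec_mulVec, hAAt, zero_mulVec,
        sub_zero, smul_smul, sq]

lemma transpose_mulVec_ne_zero {K : Type*} [CommRing K] [IsDomain K] {A : Matrix n n K}
    (hAA : A * A = 0) {μ : K} (hμ : μ ≠ 0) {u : n → K} (hu0 : u ≠ 0) (hu : (A + Aᵀ) *ᵥ u = μ • u) :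
    Aᵀ *ᵥ u ≠ 0 := by
  intro hAtu
  rw [add_mulVec, hAtu, add_zero] at hu
  have : A *ᵥ (A *ᵥ u) = (μ * μ) • u := by rw [hu, mulVec_smul, hu, smul_smul]
  rw [mulVec_mulVec, hAA, zero_mulVec, eq_comm, smul_eq_zero] at this
  exact this.elim (mul_self_ne_zero.mpr hμ) hu0

lemma sq_mem_spectrum_transpose_mul_self {K : Type*} [CommRing K] [IsDomain K] [DecidableEq n]
    {A : Matrix n n K} (hAA : A * A = 0) {μ : K} (hμ : μ ≠ 0) {u : n → K} (hu0 : u ≠ 0)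
    (hu : (A + Aᵀ) *ᵥ u = μ • u) : μ ^ 2 ∈ spectrum K (Aᵀ * A) := by
  rw [← spectrum_toLin']
  refine Module.End.HasEigenvalue.mem_spectrum
    (Module.End.hasEigenvalue_of_hasEigenvector ⟨?_, transpose_mulVec_ne_zero hAA hμ hu0 hu⟩)
  rw [Module.End.mem_eigenspace_iff, toLin'_apply]
  exact transpose_mul_self_mulVec_transpose_mulVec hAA hu

lemma abs_eigenvalues_le_sqrt_iSup [DecidableEq n] {A : Matrix n n ℝ} (hAA : A * A = 0)
    (hS : (A + Aᵀ).IsHermitian) (hT : (Aᵀ * A).IsHermitian) (i : n) :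
    |hS.eigenvalues i| ≤ √(⨆ j, hT.eigenvalues j) := by
  by_cases hi : hS.eigenvalues i = 0
  · rw [hi, abs_zero]
    exact sqrt_nonneg _
  have hu0 : ⇑(hS.eigenvectorBasis i) ≠ 0 :=
    (WithLp.ofLp_eq_zero 2).ne.2 (hS.eigenvectorBasis.orthonormal.ne_zero i)
  obtain ⟨j, hj⟩ : hS.eigenvalues i ^ 2 ∈ Set.range hT.eigenvalues :=
    hT.spectrum_real_eq_range_eigenvalues ▸
      sq_mem_spectrum_transpose_mul_self hAA hi hu0 (hS.mulVec_eigenvectorBasis i)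
  rw [← sqrt_sq_eq_abs, ← hj]
  exact sqrt_le_sqrt (le_ciSup (Set.finite_range _).bddAbove j)

lemma sum_eigenvalues_add_transpose [DecidableEq n] {A : Matrix n n ℝ}
    (hS : (A + Aᵀ).IsHermitian) :
    ∑ i, hS.eigenvalues i = 2 * A.trace := by
  have := hS.trace_eq_sum_eigenvalues
  rw [trace_add, trace_transpose] at this
  simp only [RCLike.ofReal_real_eq_id, id] at this
  linarith

lemma dotProduct_mulVec_ofLp_sum_smul_eigenvectorBasis [DecidableEq n] {S : Matrix n n ℝ}
    (hS : S.IsHermitian) (y : n → ℝ) :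
    WithLp.ofLp (∑ i, y i • hS.eigenvectorBasis i) ⬝ᵥ
        (S *ᵥ WithLp.ofLp (∑ i, y i • hS.eigenvectorBasis i)) =
      ∑ i, hS.eigenvalues i * y i ^ 2 := by
  have hSx : S *ᵥ WithLp.ofLp (∑ i, y i • hS.eigenvectorBasis i) =
      WithLp.ofLp (∑ i, (hS.eigenvalues i * y i) • hS.eigenvectorBasis i) := by
    simp [mulVec_sum, mulVec_smul, hS.mulVec_eigenvectorBasis, smul_smul, mul_comm]
  rw [hSx, dotProduct_comm, ← star_trivial (WithLp.ofLp (∑ i, y i • hS.eigenvectorBasis i)),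
    ← EuclideanSpace.inner_eq_star_dotProduct, hS.eigenvectorBasis.orthonormal.inner_sum]
  simp only [conj_trivial]
  exact Finset.sum_congr rfl fun i _ => by ring

lemma eigenvalues_eq_zero_of_iSup_eq_zero [DecidableEq n] {A : Matrix n n ℝ}
    (hS : (A + Aᵀ).IsHermitian) (htr : A.trace = 0) (h : ⨆ i, hS.eigenvalues i = 0) (i : n) :
    hS.eigenvalues i = 0 := by
  have hle : ∀ j, hS.eigenvalues j ≤ 0 := h ▸ le_ciSup (Set.finite_range _).bddAbove
  exact (Finset.sum_eq_zero_iff_of_nonpos fun j _ => hle j).mp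
    (by rw [sum_eigenvalues_add_transpose, htr, mul_zero]) i (Finset.mem_univ i)

end LinearAlgebra

section GaussianVector

variable {ι : Type*} [Fintype ι]

lemma map_eq_pi_gaussianReal {Ω : Type*} [MeasurableSpace Ω] {P : Measure Ω}
    {v : Ω → ι → ℝ} (hmeas : ∀ i, Measurable fun ω => v ω i)
    (hIndep : iIndepFun (fun i ω => v ω i) P)
    (hlaw : ∀ i, P.map (fun ω => v ω i) = gaussianReal 0 1) :
    P.map v = Measure.pi fun _ => gaussianReal 0 1 := by
  rw [show (fun _ : ι => gaussianReal 0 1) = fun i => P.map (fun ω => v ω i) from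
    funext fun i => (hlaw i).symm]
  exact hIndep.map_fun_eq_pi_map fun i => (hmeas i).aemeasurable

lemma pi_gaussianReal_map_ofLp_sum_smul (b : OrthonormalBasis ι ℝ (EuclideanSpace ℝ ι)) :
    (Measure.pi fun _ : ι => gaussianReal 0 1).map (fun y => WithLp.ofLp (∑ i, y i • b i)) =
      Measure.pi fun _ => gaussianReal 0 1 := by
  have h := congrArg (Measure.map WithLp.ofLp)
    ((stdGaussian_eq_map_pi_orthonormalBasis b).symm.trans map_pi_eq_stdGaussian.symm)
  rw [Measure.map_map (by fun_prop) (by fun_prop),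
    Measure.map_map (by fun_prop) (by fun_prop)] at h
  simpa [Function.comp_def] using h

lemma measure_abs_dotProduct_mulVec_ge_eq [DecidableEq ι] {A : Matrix ι ι ℝ}
    (hS : (A + Aᵀ).IsHermitian) (htr : A.trace = 0) {Ω : Type*} [MeasurableSpace Ω]
    {P : Measure Ω} {v : Ω → ι → ℝ} (hv : Measurable v)
    (hlaw : P.map v = Measure.pi fun _ => gaussianReal 0 1) (ε : ℝ) :
    P {ω | ε ≤ |v ω ⬝ᵥ (A *ᵥ v ω)|} = (Measure.pi fun _ : ι => gaussianReal 0 1)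
      {y | ε ≤ |∑ i, hS.eigenvalues i / 2 * (y i ^ 2 - 1)|} := by
  have hset : MeasurableSet {x : ι → ℝ | ε ≤ |x ⬝ᵥ (A *ᵥ x)|} :=
    measurableSet_le measurable_const (by fun_prop)
  set F : (ι → ℝ) → ι → ℝ := fun y => WithLp.ofLp (∑ i, y i • hS.eigenvectorBasis i)
  have hsum : ∑ i, hS.eigenvalues i = 0 := by rw [sum_eigenvalues_add_transpose, htr, mul_zero]
  have hquad : ∀ y, F y ⬝ᵥ (A *ᵥ F y) = ∑ i, hS.eigenvalues i / 2 * (y i ^ 2 - 1) := by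
    intro y
    have h2 := dotProduct_add_transpose_mulVec A (F y)
    rw [dotProduct_mulVec_ofLp_sum_smul_eigenvectorBasis hS] at h2
    have hcenter : ∑ i, hS.eigenvalues i / 2 * (y i ^ 2 - 1) =
        (∑ i, hS.eigenvalues i * y i ^ 2 - ∑ i, hS.eigenvalues i) / 2 := by
      rw [← Finset.sum_sub_distrib, Finset.sum_div]
      exact Finset.sum_congr rfl fun i _ => by ring
    rw [hcenter, hsum]
    linarith
  calc P {ω | ε ≤ |v ω ⬝ᵥ (A *ᵥ v ω)|} = P.map v {x | ε ≤ |x ⬝ᵥ (A *ᵥ x)|} :=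
        (Measure.map_apply hv hset).symm
    _ = ((Measure.pi fun _ : ι => gaussianReal 0 1).map F) {x | ε ≤ |x ⬝ᵥ (A *ᵥ x)|} := by
        rw [hlaw, pi_gaussianReal_map_ofLp_sum_smul]
    _ = _ := by
        rw [Measure.map_apply (by fun_prop) hset]
        simp only [Set.preimage_ofPred_eq, hquad]

end GaussianVector

theorem nilpotent_traceless_gaussian_quadratic_form_general (d : ℕ)
    {Ω : Type*} [MeasurableSpace Ω] (P : Measure Ω)
    (v : Ω → Fin d → ℝ)
    (hmeas : ∀ i, Measurable fun ω => v ω i)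
    (hIndep : iIndepFun (fun i ω => v ω i) P)
    (hlaw : ∀ i, P.map (fun ω => v ω i) = gaussianReal 0 1)
    (A : Matrix (Fin d) (Fin d) ℝ) (htr : A.trace = 0) (hAA : A * A = 0)
    (hSym : (A + Aᵀ).IsHermitian) (hATA : (Aᵀ * A).IsHermitian)
    (lamSym lamATA : ℝ)
    (hlamSym : lamSym = ⨆ i, hSym.eigenvalues i)
    (hlamATA : lamATA = ⨆ i, hATA.eigenvalues i)
    (ε : ℝ) (hε : 0 < ε) :
    (0 < lamSym → P {ω | ε ≤ |v ω ⬝ᵥ (A *ᵥ v ω)|}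
        ≤ ENNReal.ofReal (4 * Real.exp (- ((d : ℝ) / 2) *
            G ((d : ℝ) * Real.sqrt (lamATA / 2)) (ε / 2)))) ∧
    (lamSym = 0 → P {ω | ε ≤ |v ω ⬝ᵥ (A *ᵥ v ω)|} = 0) := by
  rw [measure_abs_dotProduct_mulVec_ge_eq hSym htr (measurable_pi_lambda v hmeas)
    (map_eq_pi_gaussianReal hmeas hIndep hlaw)]
  refine ⟨fun hpos => ?_, fun hzero => ?_⟩
  · obtain ⟨i₀, hi₀⟩ : ∃ i, 0 < hSym.eigenvalues i := by
      by_contra! h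
      exact hpos.not_ge (hlamSym ▸ Real.iSup_le h le_rfl)
    have habs : ∀ i, |hSym.eigenvalues i / 2| ≤ √lamATA / 2 := fun i => by
      rw [abs_div, abs_two, hlamATA]
      gcongr
      exact abs_eigenvalues_le_sqrt_iSup hAA hSym hATA i
    have hsqrt : 0 < √lamATA := by linarith [(le_abs_self _).trans (habs i₀)]
    have hlam : 0 < lamATA := sqrt_pos.mp hsqrt
    have hd : (0 : ℝ) < d := by exact_mod_cast i₀.pos
    have hcard : (Fintype.card (Fin d) : ℝ) * (√lamATA / 2) ≤ 2 * (d * √(lamATA / 2)) := by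
      have : √lamATA ≤ 4 * √(lamATA / 2) := by
        nlinarith [sq_sqrt hlam.le, sq_sqrt (half_pos hlam).le, sqrt_nonneg lamATA,
          sqrt_nonneg (lamATA / 2)]
      rw [Fintype.card_fin]
      nlinarith
    refine (measure_abs_sum_mul_sq_sub_one_ge_le_exp_G (by positivity) habs (by positivity) hε
      hcard).trans (ENNReal.ofReal_le_ofReal ?_)
    rw [Fintype.card_fin]
    gcongr
    norm_num
  · simp [eigenvalues_eq_zero_of_iSup_eq_zero hSym htr (hlamSym ▸ hzero), hε.not_ge]

/-- Deviation bound for nilpotent traceless Gaussian quadratic forms: for `v` a vector of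
`d ≥ 1` i.i.d. standard normals and `A` a (not necessarily symmetric) `d × d` real matrix
with `tr A = 0` and `A * A = 0`, if the largest eigenvalue `lamSym` of `A + Aᵀ` is positive
then `P(|v'Av| ≥ ε) ≤ 4 exp(-(d/2) G(d √(λ_d(AᵀA)/2), ε/2))` where `lamATA` is the largest
eigenvalue of `AᵀA`, and if `lamSym = 0` then this probability is zero. -/
theorem nilpotent_traceless_gaussian_quadratic_form (d : ℕ) (hd : 1 ≤ d)
    {Ω : Type*} [MeasurableSpace Ω] (P : Measure Ω) [IsProbabilityMeasure P]
    (v : Ω → Fin d → ℝ)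
    (hmeas : ∀ i, Measurable fun ω => v ω i)
    (hIndep : iIndepFun (fun i ω => v ω i) P)
    (hlaw : ∀ i, P.map (fun ω => v ω i) = gaussianReal 0 1)
    (A : Matrix (Fin d) (Fin d) ℝ) (htr : A.trace = 0) (hAA : A * A = 0)
    (hSym : (A + Aᵀ).IsHermitian) (hATA : (Aᵀ * A).IsHermitian)
    (lamSym lamATA : ℝ)
    (hlamSym : lamSym = ⨆ i, hSym.eigenvalues i)
    (hlamATA : lamATA = ⨆ i, hATA.eigenvalues i)
    (ε : ℝ) (hε : 0 < ε) :
    (0 < lamSym → P {ω | ε ≤ |v ω ⬝ᵥ (A *ᵥ v ω)|}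
        ≤ ENNReal.ofReal (4 * Real.exp (- ((d : ℝ) / 2) *
            G ((d : ℝ) * Real.sqrt (lamATA / 2)) (ε / 2)))) ∧
    (lamSym = 0 → P {ω | ε ≤ |v ω ⬝ᵥ (A *ᵥ v ω)|} = 0) :=
  nilpotent_traceless_gaussian_quadratic_form_general d P v hmeas hIndep hlaw A htr hAA hSym hATA
    lamSym lamATA hlamSym hlamATA ε hε

end Stmt11
end

section
/- (Explicit deviation bound for nilpotent traceless Gaussian quadratic forms.) Let d ≥ 1 be an integer, let v be a random vector in ℝ^d with i.i.d. standard normal components, and let A be a (not necessarily symmetric) d×d real matrix with trace(A) = 0 and A·A = 0 (the zero matrix). For each ε > 0: if the largest eigenvalue of A + A' is positive, then P( |v'Av| ≥ ε ) ≤ 4·exp( − d·ε² / (4·d·√(2·λ_d(A'A))·(ε + d·√(2·λ_d(A'A)))) ), where λ_d(A'A) is the largest eigenvalue of A'A; and if the largest eigenvalue of A + A' is 0, then P( |v'Av| ≥ ε ) = 0. -/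
/-!
Write `S = A + Aᵀ`, so `vᵀAv = vᵀSv / 2`. Rotating `v` into an eigenbasis of `S`, which
preserves the standard Gaussian, turns the form into `∑ νᵢ gᵢ² / 2` with `gᵢ` i.i.d. `N(0,1)` and
`νᵢ` the eigenvalues of `S`. Since `A² = 0`, an eigenvector `u` of `S` satisfies
`AᵀAu = νAᵀu`, whence `‖Au‖² = ν²/2` and `ν² ≤ 2 λ_max(AᵀA)`; since `tr A = 0`, `∑ νᵢ = 0`.
A Chernoff bound with the explicit moment generating function `∏ (1 - tνᵢ)^{-1/2}`, together with
`(1 - x)^{-1/2} ≤ exp (x/2 + x²)` for `x ≤ 1/2`, gives each one-sided tail. If `λ_max(S) = 0`,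
then all `νᵢ` vanish and the form is identically zero.
-/

open Matrix MeasureTheory ProbabilityTheory Real

lemma Real.inv_sqrt_one_sub_le_exp {x : ℝ} (hx : x ≤ 1 / 2) :
    (√(1 - x))⁻¹ ≤ exp (x / 2 + x ^ 2) := by
  have h1 : 0 < 1 - x := by linarith
  have key : 1 ≤ (1 - x) * exp (x + 2 * x ^ 2) := by
    nlinarith [add_one_le_exp (x + 2 * x ^ 2),
      mul_nonneg (sq_nonneg x) (by linarith : 0 ≤ 1 - 2 * x)]
  have hsq : exp (x / 2 + x ^ 2) = √(exp (x + 2 * x ^ 2)) := by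
    rw [← exp_half]; ring_nf
  rw [hsq, inv_le_iff_one_le_mul₀' (sqrt_pos.2 h1), ← sqrt_mul h1.le]
  exact one_le_sqrt.2 key

namespace Matrix

variable {m n α : Type*} [Fintype m] [Fintype n] [CommSemiring α]

lemma dotProduct_mulVec_add_transpose (A : Matrix n n α) (x : n → α) :
    x ⬝ᵥ (A + Aᵀ) *ᵥ x = 2 * (x ⬝ᵥ A *ᵥ x) := by
  rw [add_mulVec, dotProduct_add, dotProduct_transpose_mulVec]
  ring

lemma mulVec_dotProduct (B : Matrix m n α) (x : n → α) (y : m → α) :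
    (B *ᵥ x) ⬝ᵥ y = x ⬝ᵥ Bᵀ *ᵥ y := by
  rw [dotProduct_comm, dotProduct_transpose_mulVec]

namespace IsHermitian

variable [DecidableEq n] {M : Matrix n n ℝ} (hM : M.IsHermitian)

lemma transpose_eigenvectorUnitary_mul_self :
    (hM.eigenvectorUnitary : Matrix n n ℝ)ᵀ * hM.eigenvectorUnitary = 1 := by
  simpa [star_eq_conjTranspose] using Unitary.coe_star_mul_self hM.eigenvectorUnitary

lemma eigenvectorUnitary_mul_transpose_self :
    (hM.eigenvectorUnitary : Matrix n n ℝ) * (hM.eigenvectorUnitary : Matrix n n ℝ)ᵀ = 1 := by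
  simpa [star_eq_conjTranspose] using Unitary.coe_mul_star_self hM.eigenvectorUnitary

lemma dotProduct_eigenvectorUnitary_mulVec (x y : n → ℝ) :
    ((hM.eigenvectorUnitary : Matrix n n ℝ) *ᵥ x) ⬝ᵥ ((hM.eigenvectorUnitary : Matrix n n ℝ) *ᵥ y)
      = x ⬝ᵥ y := by
  rw [mulVec_dotProduct, mulVec_mulVec, transpose_eigenvectorUnitary_mul_self, one_mulVec]

lemma dotProduct_mulVec_eigenvectorUnitary_mulVec (x : n → ℝ) :
    ((hM.eigenvectorUnitary : Matrix n n ℝ) *ᵥ x) ⬝ᵥ M *ᵥ ((hM.eigenvectorUnitary : Matrix n n ℝ) *ᵥ x)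
      = ∑ i, hM.eigenvalues i * x i ^ 2 := by
  have hdiag := hM.conjStarAlgAut_star_eigenvectorUnitary
  rw [Unitary.conjStarAlgAut_star_apply, star_eq_conjTranspose,
    conjTranspose_eq_transpose_of_trivial] at hdiag
  rw [mulVec_dotProduct, mulVec_mulVec, mulVec_mulVec, hdiag]
  simp only [dotProduct, mulVec_diagonal, Function.comp_apply, RCLike.ofReal_real_eq_id, id]
  exact Finset.sum_congr rfl fun i _ => by ring

lemma dotProduct_mulVec_le_iSup_eigenvalues (x : n → ℝ) :
    x ⬝ᵥ M *ᵥ x ≤ (⨆ i, hM.eigenvalues i) * (x ⬝ᵥ x) := by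
  set y := (hM.eigenvectorUnitary : Matrix n n ℝ)ᵀ *ᵥ x
  have hx : (hM.eigenvectorUnitary : Matrix n n ℝ) *ᵥ y = x := by
    rw [mulVec_mulVec, eigenvectorUnitary_mul_transpose_self, one_mulVec]
  rw [← hx, dotProduct_mulVec_eigenvectorUnitary_mulVec, dotProduct_eigenvectorUnitary_mulVec,
    dotProduct, Finset.mul_sum]
  refine Finset.sum_le_sum fun i _ => ?_
  rw [← sq]
  exact mul_le_mul_of_nonneg_right (le_ciSup (Set.finite_range _).bddAbove i) (sq_nonneg _)

end IsHermitian

lemma abs_eigenvalues_add_transpose_le {A : Matrix n n ℝ} [DecidableEq n] (hAA : A * A = 0)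
    (hS : (A + Aᵀ).IsHermitian) (hT : (Aᵀ * A).IsHermitian) (i : n) :
    |hS.eigenvalues i| ≤ √(2 * ⨆ j, hT.eigenvalues j) := by
  set u : n → ℝ := (hS.eigenvectorUnitary : Matrix n n ℝ) *ᵥ Pi.single i 1
  set ν := hS.eigenvalues i
  have hu : (A + Aᵀ) *ᵥ u = ν • u := by
    simpa [u, IsHermitian.eigenvectorUnitary_mulVec] using hS.mulVec_eigenvectorBasis i
  have hunit : u ⬝ᵥ u = 1 := by
    rw [hS.dotProduct_eigenvectorUnitary_mulVec]
    simp
  have hquad : u ⬝ᵥ A *ᵥ u = ν / 2 := by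
    have := dotProduct_mulVec_add_transpose A u
    rw [hu, dotProduct_smul, hunit, smul_eq_mul, mul_one] at this
    linarith
  have hATA : (Aᵀ * A) *ᵥ u = ν • (Aᵀ *ᵥ u) := by
    have hTT : Aᵀ * Aᵀ = 0 := by rw [← transpose_mul, hAA, transpose_zero]
    rw [← mulVec_mulVec, show A *ᵥ u = ν • u - Aᵀ *ᵥ u by rw [← hu, add_mulVec]; abel,
      mulVec_sub, mulVec_mulVec, hTT, zero_mulVec, sub_zero, mulVec_smul]
  have := hT.dotProduct_mulVec_le_iSup_eigenvalues u
  rw [hATA, hunit, dotProduct_smul, dotProduct_transpose_mulVec, hquad, smul_eq_mul] at this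
  exact abs_le_sqrt (by nlinarith)

end Matrix

namespace ProbabilityTheory

/-- For `c ≥ 1/2` both sides are junk `0`. -/
lemma integral_exp_mul_sq_gaussianReal (c : ℝ) :
    ∫ x, exp (c * x ^ 2) ∂gaussianReal 0 1 = (√(1 - 2 * c))⁻¹ := by
  have hpdf : ∀ x : ℝ, gaussianPDFReal 0 1 x • exp (c * x ^ 2)
      = (√(2 * π))⁻¹ * exp (-(1 / 2 - c) * x ^ 2) := fun x => by
    rw [gaussianPDFReal_def, smul_eq_mul, mul_assoc, ← exp_add]
    congr 2
    · simp
    · simp only [NNReal.coe_one, sub_zero]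
      ring
  rw [integral_gaussianReal_eq_integral_smul one_ne_zero]
  simp_rw [hpdf]
  rw [integral_const_mul, integral_gaussian, ← sqrt_inv, ← sqrt_mul (by positivity), ← sqrt_inv]
  congr 1
  field_simp

lemma integrable_exp_mul_sq_gaussianReal {c : ℝ} (hc : c < 1 / 2) :
    Integrable (fun x => exp (c * x ^ 2)) (gaussianReal 0 1) := by
  -- a non-integrable function has integral `0`
  refine Integrable.of_integral_ne_zero ?_
  rw [integral_exp_mul_sq_gaussianReal]
  have : 0 < 1 - 2 * c := by linarith
  positivity

variable {n : Type*} [Fintype n]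

lemma integrable_exp_mul_sum_mul_sq_pi_gaussianReal {a : n → ℝ} {t : ℝ}
    (h : ∀ i, 2 * t * a i < 1) :
    Integrable (fun x : n → ℝ => exp (t * ∑ i, a i * x i ^ 2))
      (Measure.pi fun _ => gaussianReal 0 1) := by
  simp_rw [Finset.mul_sum, exp_sum, ← mul_assoc]
  exact Integrable.fintype_prod fun i =>
    integrable_exp_mul_sq_gaussianReal (by linarith [h i])

lemma mgf_sum_mul_sq_pi_gaussianReal (a : n → ℝ) (t : ℝ) :
    mgf (fun x : n → ℝ => ∑ i, a i * x i ^ 2) (Measure.pi fun _ => gaussianReal 0 1) t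
      = ∏ i, (√(1 - 2 * t * a i))⁻¹ := by
  simp_rw [mgf, Finset.mul_sum, exp_sum, ← mul_assoc]
  rw [integral_fintype_prod_eq_prod (f := fun i y => exp (t * a i * y ^ 2))]
  exact Finset.prod_congr rfl fun i _ => by
    rw [integral_exp_mul_sq_gaussianReal, mul_assoc]

lemma mgf_sum_mul_sq_pi_gaussianReal_le {a : n → ℝ} (ha : ∑ i, a i = 0) {t : ℝ}
    (h : ∀ i, 2 * t * a i ≤ 1 / 2) :
    mgf (fun x : n → ℝ => ∑ i, a i * x i ^ 2) (Measure.pi fun _ => gaussianReal 0 1) t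
      ≤ exp (4 * t ^ 2 * ∑ i, a i ^ 2) := by
  calc _ = ∏ i, (√(1 - 2 * t * a i))⁻¹ := mgf_sum_mul_sq_pi_gaussianReal a t
    _ ≤ ∏ i, exp (2 * t * a i / 2 + (2 * t * a i) ^ 2) :=
      Finset.prod_le_prod (fun i _ => by positivity) fun i _ => Real.inv_sqrt_one_sub_le_exp (h i)
    _ = exp (t * ∑ i, a i + 4 * t ^ 2 * ∑ i, a i ^ 2) := by
      rw [← exp_sum, Finset.mul_sum, Finset.mul_sum, ← Finset.sum_add_distrib]
      exact congrArg exp (Finset.sum_congr rfl fun i _ => by ring)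
    _ = exp (4 * t ^ 2 * ∑ i, a i ^ 2) := by rw [ha, mul_zero, zero_add]

lemma measureReal_sum_mul_sq_ge_le {a : n → ℝ} (ha : ∑ i, a i = 0) {r : ℝ}
    (hr : 0 < r) (har : ∀ i, |a i| ≤ r) {ε : ℝ} (hε : 0 < ε) :
    (Measure.pi fun _ => gaussianReal 0 1).real {x : n → ℝ | ε ≤ ∑ i, a i * x i ^ 2}
      ≤ exp (-ε ^ 2 / (8 * r * (ε + 2 * Fintype.card n * r))) := by
  set D := 8 * r * (ε + 2 * Fintype.card n * r)
  have hnr : 0 ≤ 16 * Fintype.card n * r ^ 2 := by positivity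
  have hD : 0 < D := by positivity
  -- `t` makes the Chernoff exponent `-tε + 4t²nr²` at most `-tε/2` while keeping `2tr ≤ 1/2`
  set t := 2 * ε / D
  have ht : 0 ≤ t := by positivity
  have htr : 2 * t * r ≤ 1 / 2 := by
    rw [show 2 * t * r = 4 * ε * r / D by ring, div_le_iff₀ hD]
    nlinarith [mul_pos hε hr]
  have hta : ∀ i, 2 * t * a i ≤ 1 / 2 := fun i =>
    le_trans (by gcongr; exact (abs_le.1 (har i)).2) htr
  have hsq : ∑ i, a i ^ 2 ≤ Fintype.card n * r ^ 2 := by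
    calc ∑ i, a i ^ 2 ≤ ∑ _i : n, r ^ 2 :=
          Finset.sum_le_sum fun i _ => sq_le_sq' (abs_le.1 (har i)).1 (abs_le.1 (har i)).2
      _ = Fintype.card n * r ^ 2 := by simp
  calc _ ≤ exp (-t * ε) * mgf (fun x : n → ℝ => ∑ i, a i * x i ^ 2)
        (Measure.pi fun _ => gaussianReal 0 1) t :=
        measure_ge_le_exp_mul_mgf ε ht
          (integrable_exp_mul_sum_mul_sq_pi_gaussianReal fun i => by linarith [hta i])
    _ ≤ exp (-t * ε) * exp (4 * t ^ 2 * (Fintype.card n * r ^ 2)) := by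
      gcongr
      exact (mgf_sum_mul_sq_pi_gaussianReal_le ha hta).trans (by gcongr)
    _ ≤ exp (-ε ^ 2 / D) := by
      rw [← exp_add]
      gcongr
      have : t * (8 * Fintype.card n * r ^ 2) ≤ ε := by
        rw [show t * (8 * Fintype.card n * r ^ 2) = ε * (16 * Fintype.card n * r ^ 2) / D by ring,
          div_le_iff₀ hD]
        nlinarith [mul_pos hε hr]
      rw [show -ε ^ 2 / D = -t * ε / 2 by ring]
      nlinarith

lemma map_pi_gaussianReal_orthonormalBasis (b : OrthonormalBasis n ℝ (EuclideanSpace ℝ n)) :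
    (Measure.pi fun _ : n => gaussianReal 0 1).map (fun x => ∑ i, x i • ⇑(b i))
      = Measure.pi fun _ : n => gaussianReal 0 1 := by
  have h := (stdGaussian_eq_map_pi_orthonormalBasis b).symm.trans map_pi_eq_stdGaussian.symm
  have hofLp := congrArg (Measure.map (WithLp.ofLp (p := 2))) h
  rw [Measure.map_map (by fun_prop) (by fun_prop), Measure.map_map (by fun_prop) (by fun_prop)]
    at hofLp
  simpa [Function.comp_def] using hofLp

lemma _root_.Matrix.IsHermitian.map_eigenvectorUnitary_mulVec_pi_gaussianReal [DecidableEq n]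
    {M : Matrix n n ℝ} (hM : M.IsHermitian) :
    (Measure.pi fun _ : n => gaussianReal 0 1).map ((hM.eigenvectorUnitary : Matrix n n ℝ) *ᵥ ·)
      = Measure.pi fun _ : n => gaussianReal 0 1 := by
  convert map_pi_gaussianReal_orthonormalBasis hM.eigenvectorBasis using 2
  ext x j
  simp [mulVec, dotProduct, mul_comm]

lemma _root_.Matrix.IsHermitian.map_dotProduct_mulVec_pi_gaussianReal [DecidableEq n]
    {M : Matrix n n ℝ} (hM : M.IsHermitian) :
    (Measure.pi fun _ : n => gaussianReal 0 1).map (fun x => x ⬝ᵥ M *ᵥ x)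
      = (Measure.pi fun _ : n => gaussianReal 0 1).map
          (fun x => ∑ i, hM.eigenvalues i * x i ^ 2) := by
  conv_lhs => rw [← hM.map_eigenvectorUnitary_mulVec_pi_gaussianReal]
  rw [Measure.map_map (by fun_prop) (by fun_prop)]
  exact congrArg (fun f => Measure.map f _) (funext hM.dotProduct_mulVec_eigenvectorUnitary_mulVec)

lemma map_dotProduct_mulVec_pi_gaussianReal [DecidableEq n] {A : Matrix n n ℝ}
    (hS : (A + Aᵀ).IsHermitian) :
    (Measure.pi fun _ : n => gaussianReal 0 1).map (fun x => x ⬝ᵥ A *ᵥ x)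
      = (Measure.pi fun _ : n => gaussianReal 0 1).map
          (fun x => ∑ i, hS.eigenvalues i / 2 * x i ^ 2) := by
  have hA : (fun x : n → ℝ => x ⬝ᵥ A *ᵥ x) = (· / 2) ∘ fun x => x ⬝ᵥ (A + Aᵀ) *ᵥ x := by
    ext x
    simp [dotProduct_mulVec_add_transpose]
  have hY : (fun x : n → ℝ => ∑ i, hS.eigenvalues i / 2 * x i ^ 2)
      = (· / 2) ∘ fun x => ∑ i, hS.eigenvalues i * x i ^ 2 := by
    ext x
    simp only [Function.comp_apply, Finset.sum_div]
    exact Finset.sum_congr rfl fun i _ => by ring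
  rw [hA, hY, ← Measure.map_map (by fun_prop) (by fun_prop),
    ← Measure.map_map (by fun_prop) (by fun_prop), hS.map_dotProduct_mulVec_pi_gaussianReal]

lemma measureReal_abs_sum_mul_sq_ge_le {a : n → ℝ} (ha : ∑ i, a i = 0) {r : ℝ}
    (hr : 0 < r) (har : ∀ i, |a i| ≤ r) {ε : ℝ} (hε : 0 < ε) :
    (Measure.pi fun _ => gaussianReal 0 1).real {x : n → ℝ | ε ≤ |∑ i, a i * x i ^ 2|}
      ≤ 2 * exp (-ε ^ 2 / (8 * r * (ε + 2 * Fintype.card n * r))) := by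
  have hneg : ∀ x : n → ℝ, -∑ i, a i * x i ^ 2 = ∑ i, -a i * x i ^ 2 := fun x => by
    simp [Finset.sum_neg_distrib]
  have hsplit : {x : n → ℝ | ε ≤ |∑ i, a i * x i ^ 2|}
      ⊆ {x | ε ≤ ∑ i, a i * x i ^ 2} ∪ {x | ε ≤ ∑ i, -a i * x i ^ 2} := fun x (hx : ε ≤ |_|) => by
    rcases le_abs'.1 hx with h | h
    · exact Or.inr (show ε ≤ _ by rw [← hneg]; linarith)
    · exact Or.inl h
  calc _ ≤ _ := measureReal_mono hsplit
    _ ≤ _ := measureReal_union_le _ _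
    _ ≤ _ := by
      rw [two_mul]
      gcongr
      · exact measureReal_sum_mul_sq_ge_le ha hr har hε
      · exact measureReal_sum_mul_sq_ge_le (by simp [ha]) hr (by simpa using har) hε

lemma measure_abs_dotProduct_mulVec_ge [DecidableEq n] {Ω : Type*} [MeasurableSpace Ω]
    {P : Measure Ω} {v : Ω → n → ℝ} (hmv : Measurable v)
    (hv : P.map v = Measure.pi fun _ => gaussianReal 0 1) {A : Matrix n n ℝ}
    (hS : (A + Aᵀ).IsHermitian) (ε : ℝ) :
    P {ω | ε ≤ |v ω ⬝ᵥ A *ᵥ v ω|}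
      = (Measure.pi fun _ => gaussianReal 0 1) {x | ε ≤ |∑ i, hS.eigenvalues i / 2 * x i ^ 2|} := by
  have hset : MeasurableSet {y : ℝ | ε ≤ |y|} := measurableSet_le (by fun_prop) (by fun_prop)
  calc P {ω | ε ≤ |v ω ⬝ᵥ A *ᵥ v ω|}
      = ((P.map v).map fun x => x ⬝ᵥ A *ᵥ x) {y | ε ≤ |y|} := by
        rw [Measure.map_map (by fun_prop) hmv, Measure.map_apply (by fun_prop) hset]; rfl
    _ = _ := by
        rw [hv, map_dotProduct_mulVec_pi_gaussianReal hS, Measure.map_apply (by fun_prop) hset]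
        rfl

end ProbabilityTheory

namespace Stmt12

/-- Explicit deviation bound for nilpotent traceless Gaussian quadratic forms: for `v` a
vector of `d ≥ 1` i.i.d. standard normals and `A` a (not necessarily symmetric) `d × d` real
matrix with `tr A = 0` and `A * A = 0`, if the largest eigenvalue `lamSym` of `A + Aᵀ` is
positive then `P(|v'Av| ≥ ε) ≤ 4 exp(-d ε²/(4 d √(2 λ_d(AᵀA)) (ε + d √(2 λ_d(AᵀA)))))` where
`lamATA` is the largest eigenvalue of `AᵀA`, and if `lamSym = 0` then this probability is
zero. -/
theorem nilpotent_traceless_gaussian_quadratic_form_explicit (d : ℕ) (hd : 1 ≤ d)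
    {Ω : Type*} [MeasurableSpace Ω] (P : Measure Ω) [IsProbabilityMeasure P]
    (v : Ω → Fin d → ℝ)
    (hmeas : ∀ i, Measurable fun ω => v ω i)
    (hIndep : iIndepFun (fun i ω => v ω i) P)
    (hlaw : ∀ i, P.map (fun ω => v ω i) = gaussianReal 0 1)
    (A : Matrix (Fin d) (Fin d) ℝ) (htr : A.trace = 0) (hAA : A * A = 0)
    (hSym : (A + Aᵀ).IsHermitian) (hATA : (Aᵀ * A).IsHermitian)
    (lamSym lamATA : ℝ)
    (hlamSym : lamSym = ⨆ i, hSym.eigenvalues i)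
    (hlamATA : lamATA = ⨆ i, hATA.eigenvalues i)
    (ε : ℝ) (hε : 0 < ε) :
    (0 < lamSym → P {ω | ε ≤ |v ω ⬝ᵥ (A *ᵥ v ω)|}
        ≤ ENNReal.ofReal (4 * Real.exp (- (d : ℝ) * ε ^ 2 /
            (4 * (d : ℝ) * Real.sqrt (2 * lamATA) *
              (ε + (d : ℝ) * Real.sqrt (2 * lamATA)))))) ∧
    (lamSym = 0 → P {ω | ε ≤ |v ω ⬝ᵥ (A *ᵥ v ω)|} = 0) := by
  subst hlamSym hlamATA
  have hv : P.map v = Measure.pi fun _ => gaussianReal 0 1 := by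
    have := (iIndepFun_iff_map_fun_eq_pi_map fun i => (hmeas i).aemeasurable).1 hIndep
    simpa [hlaw] using this
  rw [measure_abs_dotProduct_mulVec_ge (measurable_pi_lambda v hmeas) hv hSym ε]
  set ν := hSym.eigenvalues
  have hsum : ∑ i, ν i = 0 := by
    have := hSym.trace_eq_sum_eigenvalues
    rw [trace_add, trace_transpose, htr, add_zero] at this
    simpa using this.symm
  constructor
  · intro hpos
    set s := √(2 * ⨆ j, hATA.eigenvalues j)
    have hνs : ∀ i, |ν i| ≤ s := abs_eigenvalues_add_transpose_le hAA hSym hATA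
    have hs : 0 < s :=
      hpos.trans_le <| Real.iSup_le (fun i => (le_abs_self _).trans (hνs i)) (sqrt_nonneg _)
    have hd0 : (d : ℝ) ≠ 0 := Nat.cast_ne_zero.2 (by omega)
    rw [← ofReal_measureReal]
    refine ENNReal.ofReal_le_ofReal <| (measureReal_abs_sum_mul_sq_ge_le
      (by rw [← Finset.sum_div, hsum, zero_div]) (half_pos hs)
      (fun i => by rw [abs_div, abs_two]; linarith [hνs i]) hε).trans ?_
    rw [Fintype.card_fin, show -ε ^ 2 / (8 * (s / 2) * (ε + 2 * d * (s / 2)))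
      = -d * ε ^ 2 / (4 * d * s * (ε + d * s)) by field_simp; ring]
    linarith [exp_pos (-d * ε ^ 2 / (4 * d * s * (ε + d * s)))]
  · intro hzero
    have hle : ∀ i, ν i ≤ 0 := fun i => hzero ▸ le_ciSup (Set.finite_range ν).bddAbove i
    have hν : ∀ i, ν i = 0 := fun i =>
      (Finset.sum_eq_zero_iff_of_nonpos fun i _ => hle i).1 hsum i (Finset.mem_univ i)
    simp [hν, hε.not_ge]

end Stmt12
end

section
/- (Tail bound for noncentral chi-square with random noncentrality.) Fix integers d ≥ k ≥ 1. Let μ be a random vector in ℝ^k with ‖μ‖² > 0 almost surely, and let v be a random vector in ℝ^k with i.i.d. standard normal components, independent of μ; set B_d = ‖μ‖², so that ‖v + μ‖² conditional on μ follows a noncentral chi-square distribution with k degrees of freedom and noncentrality parameter B_d. Then for any ε > 0: P( |‖v + μ‖²/d − (k + B_d)/d| ≥ ε ) ≤ 2·E[ exp( − d·ε² / (4·(ε + 2·(k/d + B_d/d))) ) ] and P( ‖v + μ‖²/d − (k + B_d)/d ≥ ε ) ≤ E[ exp( − d·ε² / (4·(ε + 2·(k/d + B_d/d))) ) ]. 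-/
/-!
Conditionally on `μv = m`, the variable `∑ i, (v i + m i) ^ 2` is a sum of independent squared
shifted Gaussians. Completing the square against the Gaussian density gives its moment generating
function `(1 - 2s)^(-k/2) exp (s ‖m‖² / (1 - 2s))`, which `1/(1 - x) ≤ exp (x/(1 - x))` bounds by
`exp (s c / (1 - 2s))` with `c = k + ‖m‖²`. Chernoff's bound at `s = ± t / (2 (t + 2c))` then makes
both tails of `∑ i, (v i + m i) ^ 2 - c` at most `exp (-t² / (4 (t + 2c)))`, and independence of `v`
and `μv` lets this bound for fixed `m` be integrated against the law of `μv`.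
-/

open MeasureTheory ProbabilityTheory Real

lemma gaussianPDFReal_mul_exp_mul_add_sq (a : ℝ) {s : ℝ} (hs : s < 1 / 2) (x : ℝ) :
    gaussianPDFReal 0 1 x * exp (s * (x + a) ^ 2)
      = (√(1 - 2 * s))⁻¹ * exp (s * a ^ 2 / (1 - 2 * s)) *
        gaussianPDFReal (2 * s * a / (1 - 2 * s)) (1 - 2 * s)⁻¹.toNNReal x := by
  have h1 : 0 < 1 - 2 * s := by linarith
  have hexp : -(x - 0) ^ 2 / (2 * (1 : ℝ)) + s * (x + a) ^ 2
      = s * a ^ 2 / (1 - 2 * s) + -(x - 2 * s * a / (1 - 2 * s)) ^ 2 / (2 * (1 - 2 * s)⁻¹) := by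
    field_simp
    ring
  simp only [gaussianPDFReal, NNReal.coe_one, Real.coe_toNNReal _ (inv_pos.mpr h1).le]
  rw [mul_assoc, ← exp_add, hexp, exp_add, sqrt_mul (by positivity) (1 - 2 * s)⁻¹, mul_one,
    sqrt_inv]
  field_simp

lemma integrable_exp_mul_add_sq_gaussianReal (a : ℝ) {s : ℝ} (hs : s < 1 / 2) :
    Integrable (fun x => exp (s * (x + a) ^ 2)) (gaussianReal 0 1) := by
  rw [gaussianReal_of_var_ne_zero 0 one_ne_zero, gaussianPDF_def,
    integrable_withDensity_iff_integrable_smul' (by fun_prop)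
      (ae_of_all _ fun _ => ENNReal.ofReal_lt_top)]
  simp only [ENNReal.toReal_ofReal (gaussianPDFReal_nonneg _ _ _), smul_eq_mul,
    gaussianPDFReal_mul_exp_mul_add_sq a hs]
  exact (integrable_gaussianPDFReal _ _).const_mul _

lemma mgf_add_sq_gaussianReal (a : ℝ) {s : ℝ} (hs : s < 1 / 2) :
    mgf (fun x => (x + a) ^ 2) (gaussianReal 0 1) s
      = (√(1 - 2 * s))⁻¹ * exp (s * a ^ 2 / (1 - 2 * s)) := by
  rw [mgf, integral_gaussianReal_eq_integral_smul one_ne_zero]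
  simp only [smul_eq_mul, gaussianPDFReal_mul_exp_mul_add_sq a hs]
  rw [integral_const_mul, integral_gaussianPDFReal_eq_one _ (by simp; linarith), mul_one]

lemma inv_sqrt_one_sub_two_mul_le_exp {s : ℝ} (hs : s < 1 / 2) :
    (√(1 - 2 * s))⁻¹ ≤ exp (s / (1 - 2 * s)) := by
  have h1 : 0 < 1 - 2 * s := by linarith
  have hsq : (1 - 2 * s)⁻¹ ≤ exp (s / (1 - 2 * s)) ^ 2 := by
    calc (1 - 2 * s)⁻¹ = 2 * (s / (1 - 2 * s)) + 1 := by field_simp; ring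
      _ ≤ exp (2 * (s / (1 - 2 * s))) := add_one_le_exp _
      _ = exp (s / (1 - 2 * s)) ^ 2 := by rw [← exp_nat_mul]; norm_num
  rw [← sqrt_inv]
  exact (sqrt_le_sqrt hsq).trans_eq (sqrt_sq (exp_pos _).le)

lemma mgf_add_sq_gaussianReal_le (a : ℝ) {s : ℝ} (hs : s < 1 / 2) :
    mgf (fun x => (x + a) ^ 2) (gaussianReal 0 1) s ≤ exp (s * (1 + a ^ 2) / (1 - 2 * s)) := by
  rw [mgf_add_sq_gaussianReal a hs]
  calc (√(1 - 2 * s))⁻¹ * exp (s * a ^ 2 / (1 - 2 * s))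
      ≤ exp (s / (1 - 2 * s)) * exp (s * a ^ 2 / (1 - 2 * s)) := by
        gcongr; exact inv_sqrt_one_sub_two_mul_le_exp hs
    _ = exp (s * (1 + a ^ 2) / (1 - 2 * s)) := by rw [← exp_add]; ring_nf

section StandardGaussian

variable {Ω : Type*} [MeasurableSpace Ω] {P : Measure Ω} {X : Ω → ℝ} {s : ℝ}

lemma integrable_exp_mul_add_sq_of_map_eq_gaussianReal (hX : Measurable X)
    (hlaw : P.map X = gaussianReal 0 1) (a : ℝ) (hs : s < 1 / 2) :
    Integrable (fun ω => exp (s * (X ω + a) ^ 2)) P := by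
  have h := integrable_exp_mul_add_sq_gaussianReal a hs
  rw [← hlaw] at h
  exact (integrable_map_measure (by fun_prop) hX.aemeasurable).mp h

lemma mgf_add_sq_le_of_map_eq_gaussianReal (hX : Measurable X)
    (hlaw : P.map X = gaussianReal 0 1) (a : ℝ) (hs : s < 1 / 2) :
    mgf (fun ω => (X ω + a) ^ 2) P s ≤ exp (s * (1 + a ^ 2) / (1 - 2 * s)) := by
  calc mgf (fun ω => (X ω + a) ^ 2) P s = mgf (fun x => (x + a) ^ 2) (P.map X) s :=
        (mgf_map hX.aemeasurable
          (by fun_prop : Measurable fun x => exp (s * (x + a) ^ 2)).aestronglyMeasurable).symm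
    _ ≤ _ := hlaw ▸ mgf_add_sq_gaussianReal_le a hs

variable {ι : Type*} [Fintype ι] {v : Ω → ι → ℝ}

lemma integrable_exp_mul_sum_add_sq (hmeas : ∀ i, Measurable fun ω => v ω i)
    (hIndep : iIndepFun (fun i ω => v ω i) P)
    (hlaw : ∀ i, P.map (fun ω => v ω i) = gaussianReal 0 1)
    (m : ι → ℝ) (hs : s < 1 / 2) :
    Integrable (fun ω => exp (s * ∑ i, (v ω i + m i) ^ 2)) P := by
  have := hIndep.isProbabilityMeasure
  have h := (hIndep.comp (fun i x => (x + m i) ^ 2) (by fun_prop)).integrable_exp_mul_sum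
    (t := s) (s := Finset.univ) (by fun_prop)
    (fun i _ => integrable_exp_mul_add_sq_of_map_eq_gaussianReal (hmeas i) (hlaw i) (m i) hs)
  simpa only [Finset.sum_apply, Function.comp_apply] using h

lemma mgf_sum_add_sq_le (hmeas : ∀ i, Measurable fun ω => v ω i)
    (hIndep : iIndepFun (fun i ω => v ω i) P)
    (hlaw : ∀ i, P.map (fun ω => v ω i) = gaussianReal 0 1)
    (m : ι → ℝ) (hs : s < 1 / 2) :
    mgf (fun ω => ∑ i, (v ω i + m i) ^ 2) P s
      ≤ exp (s * (Fintype.card ι + ∑ i, m i ^ 2) / (1 - 2 * s)) := by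
  have h := (hIndep.comp (fun i x => (x + m i) ^ 2) (by fun_prop)).mgf_sum (t := s)
    (by fun_prop) Finset.univ
  rw [show (fun ω => ∑ i, (v ω i + m i) ^ 2) = ∑ i, (fun x => (x + m i) ^ 2) ∘ fun ω => v ω i by
    ext ω; simp only [Finset.sum_apply, Function.comp_apply], h]
  calc ∏ i, mgf ((fun x => (x + m i) ^ 2) ∘ fun ω => v ω i) P s
      ≤ ∏ i, exp (s * (1 + m i ^ 2) / (1 - 2 * s)) :=
        Finset.prod_le_prod (fun i _ => mgf_nonneg)
          (fun i _ => mgf_add_sq_le_of_map_eq_gaussianReal (hmeas i) (hlaw i) (m i) hs)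
    _ = exp (s * (Fintype.card ι + ∑ i, m i ^ 2) / (1 - 2 * s)) := by
        rw [← exp_sum, ← Finset.sum_div, ← Finset.mul_sum, Finset.sum_add_distrib]
        simp

end StandardGaussian

section ChiSquareTypeTail

variable {Ω : Type*} [MeasurableSpace Ω] {P : Measure Ω} [IsFiniteMeasure P] {X : Ω → ℝ} {c t : ℝ}

lemma chernoff_exponent_eq (hc : 0 < c) (ht : 0 < t) {s : ℝ} (hs : s = t / (2 * (t + 2 * c))) :
    -s * (c + t) + s * c / (1 - 2 * s) = -(t ^ 2 / (4 * (t + 2 * c))) := by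
  have h12 : 1 - 2 * s = 2 * c / (t + 2 * c) := by
    rw [hs]; field_simp; ring
  rw [h12, hs]
  field_simp
  ring

lemma measureReal_ge_add_le_of_mgf_le (hc : 0 < c) (ht : 0 < t)
    (hint : ∀ s < 1 / 2, Integrable (fun ω => exp (s * X ω)) P)
    (hmgf : ∀ s < 1 / 2, mgf X P s ≤ exp (s * c / (1 - 2 * s))) :
    P.real {ω | c + t ≤ X ω} ≤ exp (-(t ^ 2 / (4 * (t + 2 * c)))) := by
  set s := t / (2 * (t + 2 * c)) with hs_def
  have hs0 : 0 < s := by positivity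
  have hs : s < 1 / 2 := by rw [hs_def, div_lt_iff₀ (by positivity)]; linarith
  calc P.real {ω | c + t ≤ X ω} ≤ exp (-s * (c + t)) * mgf X P s :=
        measure_ge_le_exp_mul_mgf _ hs0.le (hint s hs)
    _ ≤ exp (-s * (c + t)) * exp (s * c / (1 - 2 * s)) := by gcongr; exact hmgf s hs
    _ = exp (-(t ^ 2 / (4 * (t + 2 * c)))) := by rw [← exp_add, chernoff_exponent_eq hc ht hs_def]

lemma measureReal_le_sub_le_of_mgf_le (hc : 0 < c) (ht : 0 < t)
    (hint : ∀ s < 1 / 2, Integrable (fun ω => exp (s * X ω)) P)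
    (hmgf : ∀ s < 1 / 2, mgf X P s ≤ exp (s * c / (1 - 2 * s))) :
    P.real {ω | X ω ≤ c - t} ≤ exp (-(t ^ 2 / (4 * (t + 2 * c)))) := by
  set s := t / (2 * (t + 2 * c)) with hs_def
  have hs0 : 0 < s := by positivity
  have hs : s < 1 / 2 := by rw [hs_def, div_lt_iff₀ (by positivity)]; linarith
  have hexp : s * (c - t) + -s * c / (1 - 2 * -s) ≤ -s * (c + t) + s * c / (1 - 2 * s) := by
    have h1 : 0 < 1 + 2 * s := by linarith
    have h2 : 0 < 1 - 2 * s := by linarith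
    have hsum : 2 * s * c ≤ s * c / (1 + 2 * s) + s * c / (1 - 2 * s) := by
      rw [div_add_div _ _ h1.ne' h2.ne', le_div_iff₀ (by positivity)]
      nlinarith [mul_pos hs0 hc, mul_pos (mul_pos hs0 hs0) (mul_pos hs0 hc)]
    rw [show 1 - 2 * -s = 1 + 2 * s by ring, neg_mul, neg_div]
    linarith
  calc P.real {ω | X ω ≤ c - t} ≤ exp (-(-s) * (c - t)) * mgf X P (-s) :=
        measure_le_le_exp_mul_mgf _ (by linarith) (hint (-s) (by linarith))
    _ ≤ exp (s * (c - t)) * exp (-s * c / (1 - 2 * -s)) := by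
        rw [neg_neg]; gcongr; exact hmgf (-s) (by linarith)
    _ ≤ exp (-s * (c + t) + s * c / (1 - 2 * s)) := by rw [← exp_add]; gcongr
    _ = exp (-(t ^ 2 / (4 * (t + 2 * c)))) := by rw [chernoff_exponent_eq hc ht hs_def]

lemma measureReal_le_abs_sub_le_of_mgf_le (hc : 0 < c) (ht : 0 < t)
    (hint : ∀ s < 1 / 2, Integrable (fun ω => exp (s * X ω)) P)
    (hmgf : ∀ s < 1 / 2, mgf X P s ≤ exp (s * c / (1 - 2 * s))) :
    P.real {ω | t ≤ |X ω - c|} ≤ 2 * exp (-(t ^ 2 / (4 * (t + 2 * c)))) := by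
  have hsplit : {ω | t ≤ |X ω - c|} ⊆ {ω | c + t ≤ X ω} ∪ {ω | X ω ≤ c - t} := by
    intro ω (hω : t ≤ |X ω - c|)
    rcases le_abs.mp hω with h | h
    · exact Or.inl (show c + t ≤ X ω by linarith)
    · exact Or.inr (show X ω ≤ c - t by linarith)
  calc P.real {ω | t ≤ |X ω - c|} ≤ P.real ({ω | c + t ≤ X ω} ∪ {ω | X ω ≤ c - t}) :=
        measureReal_mono hsplit
    _ ≤ P.real {ω | c + t ≤ X ω} + P.real {ω | X ω ≤ c - t} := measureReal_union_le _ _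
    _ ≤ 2 * exp (-(t ^ 2 / (4 * (t + 2 * c)))) := by
        linarith [measureReal_ge_add_le_of_mgf_le hc ht hint hmgf,
          measureReal_le_sub_le_of_mgf_le hc ht hint hmgf]

end ChiSquareTypeTail

section NoncentralChiSquare

variable {Ω ι : Type*} [MeasurableSpace Ω] {P : Measure Ω} [IsProbabilityMeasure P] [Fintype ι]
  [Nonempty ι] {v : Ω → ι → ℝ} {t : ℝ}

lemma measureReal_sum_add_sq_tail_le (hmeas : ∀ i, Measurable fun ω => v ω i)
    (hIndep : iIndepFun (fun i ω => v ω i) P)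
    (hlaw : ∀ i, P.map (fun ω => v ω i) = gaussianReal 0 1) (m : ι → ℝ) (ht : 0 < t) :
    P.real {ω | t ≤ |∑ i, (v ω i + m i) ^ 2 - (Fintype.card ι + ∑ i, m i ^ 2)|}
        ≤ 2 * exp (-(t ^ 2 / (4 * (t + 2 * (Fintype.card ι + ∑ i, m i ^ 2))))) ∧
      P.real {ω | Fintype.card ι + ∑ i, m i ^ 2 + t ≤ ∑ i, (v ω i + m i) ^ 2}
        ≤ exp (-(t ^ 2 / (4 * (t + 2 * (Fintype.card ι + ∑ i, m i ^ 2))))) := by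
  have hc : (0 : ℝ) < Fintype.card ι + ∑ i, m i ^ 2 := by
    have : (0 : ℝ) < Fintype.card ι := by exact_mod_cast Fintype.card_pos
    positivity
  have hint s (hs : s < 1 / 2) := integrable_exp_mul_sum_add_sq hmeas hIndep hlaw m hs
  have hmgf s (hs : s < 1 / 2) := mgf_sum_add_sq_le hmeas hIndep hlaw m hs
  exact ⟨measureReal_le_abs_sub_le_of_mgf_le hc ht hint hmgf,
    measureReal_ge_add_le_of_mgf_le hc ht hint hmgf⟩

end NoncentralChiSquare

namespace ProbabilityTheory.IndepFun

variable {Ω α β : Type*} [MeasurableSpace Ω] [MeasurableSpace α] [MeasurableSpace β]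
  {P : Measure Ω} [IsFiniteMeasure P] {X : Ω → α} {Y : Ω → β} {S : Set (α × β)}

lemma measure_pair_mem_eq_lintegral (hX : Measurable X) (hY : Measurable Y)
    (hXY : IndepFun X Y P) (hS : MeasurableSet S) :
    P {ω | (X ω, Y ω) ∈ S} = ∫⁻ ω, P {ω' | (X ω, Y ω') ∈ S} ∂P := by
  have hmap := (indepFun_iff_map_prod_eq_prod_map_map hX.aemeasurable hY.aemeasurable).mp hXY
  have hsection (x : α) : P.map Y (Prod.mk x ⁻¹' S) = P {ω' | (x, Y ω') ∈ S} :=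
    Measure.map_apply hY (measurable_prodMk_left hS)
  calc P {ω | (X ω, Y ω) ∈ S} = (P.map X).prod (P.map Y) S := by
        rw [← hmap, Measure.map_apply (hX.prodMk hY) hS]; rfl
    _ = ∫⁻ ω, P {ω' | (X ω, Y ω') ∈ S} ∂P := by
        rw [Measure.prod_apply hS, lintegral_map (measurable_measure_prodMk_left hS) hX]
        simp only [hsection]

lemma measure_pair_mem_le_ofReal_integral (hX : Measurable X) (hY : Measurable Y)
    (hXY : IndepFun X Y P) (hS : MeasurableSet S) {g : α → ℝ} (hg0 : 0 ≤ g)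
    (hgX : Integrable (fun ω => g (X ω)) P)
    (hbound : ∀ x, P {ω | (x, Y ω) ∈ S} ≤ ENNReal.ofReal (g x)) :
    P {ω | (X ω, Y ω) ∈ S} ≤ ENNReal.ofReal (∫ ω, g (X ω) ∂P) := by
  rw [hXY.measure_pair_mem_eq_lintegral hX hY hS,
    ofReal_integral_eq_lintegral_ofReal hgX (ae_of_all _ fun ω => hg0 (X ω))]
  exact lintegral_mono fun ω => hbound (X ω)

end ProbabilityTheory.IndepFun

lemma measure_sum_add_sq_div_tail_le {Ω : Type*} [MeasurableSpace Ω] {P : Measure Ω}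
    [IsProbabilityMeasure P] {d k : ℕ} (hk : 1 ≤ k) (hd : (0 : ℝ) < d) {v : Ω → Fin k → ℝ}
    (hmeas : ∀ i, Measurable fun ω => v ω i) (hIndep : iIndepFun (fun i ω => v ω i) P)
    (hlaw : ∀ i, P.map (fun ω => v ω i) = gaussianReal 0 1) (m : Fin k → ℝ) {ε : ℝ} (hε : 0 < ε) :
    P {ω | ε ≤ |(∑ i, (v ω i + m i) ^ 2) / d - (k + ∑ i, m i ^ 2) / d|}
        ≤ ENNReal.ofReal (2 * exp (-d * ε ^ 2 / (4 * (ε + 2 * (k / d + (∑ i, m i ^ 2) / d))))) ∧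
      P {ω | ε ≤ (∑ i, (v ω i + m i) ^ 2) / d - (k + ∑ i, m i ^ 2) / d}
        ≤ ENNReal.ofReal (exp (-d * ε ^ 2 / (4 * (ε + 2 * (k / d + (∑ i, m i ^ 2) / d))))) := by
  have : Nonempty (Fin k) := ⟨⟨0, hk⟩⟩
  obtain ⟨habs, hup⟩ := measureReal_sum_add_sq_tail_le hmeas hIndep hlaw m (mul_pos hd hε)
  simp only [Fintype.card_fin] at habs hup
  have hexp : -((d * ε) ^ 2 / (4 * (d * ε + 2 * (k + ∑ i, m i ^ 2))))
      = -d * ε ^ 2 / (4 * (ε + 2 * (k / d + (∑ i, m i ^ 2) / d))) := by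
    field_simp
  have habs_eq : {ω | ε ≤ |(∑ i, (v ω i + m i) ^ 2) / d - (k + ∑ i, m i ^ 2) / d|}
      = {ω | d * ε ≤ |∑ i, (v ω i + m i) ^ 2 - (k + ∑ i, m i ^ 2)|} := by
    ext ω
    simp only [Set.mem_ofPred_eq, ← sub_div, abs_div, abs_of_pos hd, le_div_iff₀ hd, mul_comm ε]
  have hup_eq : {ω | ε ≤ (∑ i, (v ω i + m i) ^ 2) / d - (k + ∑ i, m i ^ 2) / d}
      = {ω | k + ∑ i, m i ^ 2 + d * ε ≤ ∑ i, (v ω i + m i) ^ 2} := by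
    ext ω
    simp only [Set.mem_ofPred_eq, ← sub_div, le_div_iff₀ hd, mul_comm ε, le_sub_iff_add_le']
  rw [habs_eq, hup_eq, ← hexp, ← ofReal_measureReal, ← ofReal_measureReal]
  exact ⟨ENNReal.ofReal_le_ofReal habs, ENNReal.ofReal_le_ofReal hup⟩

namespace Stmt14

theorem noncentral_chi_square_tail_general (d k : ℕ) (hk : 1 ≤ k) (hkd : k ≤ d)
    {Ω : Type*} [MeasurableSpace Ω] (P : Measure Ω) [IsProbabilityMeasure P]
    (v μv : Ω → Fin k → ℝ)
    (hmeas : ∀ i, Measurable fun ω => v ω i)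
    (hμmeas : Measurable μv)
    (hIndep : iIndepFun (fun i ω => v ω i) P)
    (hlaw : ∀ i, P.map (fun ω => v ω i) = gaussianReal 0 1)
    (hvμIndep : IndepFun v μv P)
    (ε : ℝ) (hε : 0 < ε) :
    P {ω | ε ≤ |(∑ i, (v ω i + μv ω i) ^ 2) / (d : ℝ) -
          ((k : ℝ) + ∑ i, μv ω i ^ 2) / (d : ℝ)|}
        ≤ ENNReal.ofReal (2 * ∫ ω, Real.exp (- (d : ℝ) * ε ^ 2 /
            (4 * (ε + 2 * ((k : ℝ) / (d : ℝ) + (∑ i, μv ω i ^ 2) / (d : ℝ))))) ∂P) ∧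
    P {ω | ε ≤ (∑ i, (v ω i + μv ω i) ^ 2) / (d : ℝ) -
          ((k : ℝ) + ∑ i, μv ω i ^ 2) / (d : ℝ)}
        ≤ ENNReal.ofReal (∫ ω, Real.exp (- (d : ℝ) * ε ^ 2 /
            (4 * (ε + 2 * ((k : ℝ) / (d : ℝ) + (∑ i, μv ω i ^ 2) / (d : ℝ))))) ∂P) := by
  have hd : (0 : ℝ) < d := by exact_mod_cast hk.trans hkd
  have hv : Measurable v := measurable_pi_iff.mpr hmeas
  set g : (Fin k → ℝ) → ℝ :=
    fun m => exp (-d * ε ^ 2 / (4 * (ε + 2 * (k / d + (∑ i, m i ^ 2) / d)))) with hg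
  have hg_le_one (m : Fin k → ℝ) : g m ≤ 1 :=
    exp_le_one_iff.mpr (div_nonpos_of_nonpos_of_nonneg (by nlinarith [sq_nonneg ε])
      (by positivity))
  have hg_meas : Measurable g := by rw [hg]; fun_prop
  have hgint : Integrable (fun ω => g (μv ω)) P :=
    .of_bound (hg_meas.comp hμmeas).aestronglyMeasurable 1 (ae_of_all _ fun ω =>
      (norm_of_nonneg (exp_pos _).le).trans_le (hg_le_one _))
  have hbound m := measure_sum_add_sq_div_tail_le hk hd hmeas hIndep hlaw m hε
  have hS_abs : MeasurableSet {p : (Fin k → ℝ) × (Fin k → ℝ) |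
      ε ≤ |(∑ i, (p.2 i + p.1 i) ^ 2) / d - (k + ∑ i, p.1 i ^ 2) / d|} :=
    measurableSet_le measurable_const (by fun_prop)
  have hS_up : MeasurableSet {p : (Fin k → ℝ) × (Fin k → ℝ) |
      ε ≤ (∑ i, (p.2 i + p.1 i) ^ 2) / d - (k + ∑ i, p.1 i ^ 2) / d} :=
    measurableSet_le measurable_const (by fun_prop)
  constructor
  · rw [← integral_const_mul]
    exact hvμIndep.symm.measure_pair_mem_le_ofReal_integral hμmeas hv hS_abs
      (fun m => by positivity) (hgint.const_mul 2) fun m => (hbound m).1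
  · exact hvμIndep.symm.measure_pair_mem_le_ofReal_integral hμmeas hv hS_up
      (fun m => (exp_pos _).le) hgint fun m => (hbound m).2

/-- Tail bound for a noncentral chi-square with random noncentrality: for `d ≥ k ≥ 1`, `μv` a
random vector in `ℝᵏ` with `‖μv‖² > 0` a.s., and `v` a vector of `k` i.i.d. standard normals
independent of `μv` (so that, conditionally on `μv`, `‖v + μv‖²` is noncentral chi-square with
`k` degrees of freedom and noncentrality `B = ‖μv‖²`), for every `ε > 0`,
`P(|‖v+μv‖²/d - (k+B)/d| ≥ ε) ≤ 2 E[exp(-d ε²/(4(ε + 2(k/d + B/d))))]` and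
`P(‖v+μv‖²/d - (k+B)/d ≥ ε) ≤ E[exp(-d ε²/(4(ε + 2(k/d + B/d))))]`. -/
theorem noncentral_chi_square_tail (d k : ℕ) (hk : 1 ≤ k) (hkd : k ≤ d)
    {Ω : Type*} [MeasurableSpace Ω] (P : Measure Ω) [IsProbabilityMeasure P]
    (v μv : Ω → Fin k → ℝ)
    (hmeas : ∀ i, Measurable fun ω => v ω i)
    (hμmeas : Measurable μv)
    (hIndep : iIndepFun (fun i ω => v ω i) P)
    (hlaw : ∀ i, P.map (fun ω => v ω i) = gaussianReal 0 1)
    (hvμIndep : IndepFun v μv P)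
    (hpos : ∀ᵐ ω ∂P, 0 < ∑ i, μv ω i ^ 2)
    (ε : ℝ) (hε : 0 < ε) :
    P {ω | ε ≤ |(∑ i, (v ω i + μv ω i) ^ 2) / (d : ℝ) -
          ((k : ℝ) + ∑ i, μv ω i ^ 2) / (d : ℝ)|}
        ≤ ENNReal.ofReal (2 * ∫ ω, Real.exp (- (d : ℝ) * ε ^ 2 /
            (4 * (ε + 2 * ((k : ℝ) / (d : ℝ) + (∑ i, μv ω i ^ 2) / (d : ℝ))))) ∂P) ∧
    P {ω | ε ≤ (∑ i, (v ω i + μv ω i) ^ 2) / (d : ℝ) -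
          ((k : ℝ) + ∑ i, μv ω i ^ 2) / (d : ℝ)}
        ≤ ENNReal.ofReal (∫ ω, Real.exp (- (d : ℝ) * ε ^ 2 /
            (4 * (ε + 2 * ((k : ℝ) / (d : ℝ) + (∑ i, μv ω i ^ 2) / (d : ℝ))))) ∂P) :=
  noncentral_chi_square_tail_general d k hk hkd P v μv hmeas hμmeas hIndep hlaw hvμIndep ε hε

end Stmt14
end

section
/- (Deterministic weight inequalities.) Let x₁, x₂ ∈ [0,1], y₁, y₂ ≥ 0, and let k₁, k₂, k, d be positive integers with k₁ + k₂ = k < d. Define q = (1−x₂)²·k/(d−k+1) + (x₂−x₁)(2−x₁−x₂)·k₁/(d−k₁+1) + 1 + x₁²y₁ + x₂²y₂ + (x₁−x₂)²·(k₁/(d−k₁+1))·y₂. Then: (1) | (1−x₂)²·k/(d−k+1) + (x₂−x₁)(2−x₁−x₂)·k₁/(d−k₁+1) + 1 − x₂² − (x₁−x₂)²·k₁/(d−k₁+1) | / q ≤ 1/(1−k/d); (2) x₁²/q ≤ 1/(1 + y₁ + y₂·(k₁/d)·(1−k₁/d)) ≤ 1; (3) | x₂² − x₁²·k₁/d + (x₁−x₂)²·k₁/(d−k₁+1)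 | / q ≤ 1/((1−k₁/d)(1+y₂)) ≤ 1/(1−k₁/d). -/
/-!
Put `a = k/(d-k+1)`, `b = k₁/(d-k₁+1)`, `c = k₁/d`, `e = k/d`,
`A = (1-x₂)²a + (x₂-x₁)(2-x₁-x₂)b = (1-x₂)²(a-b) + (1-x₁)²b ≥ 0` and `M = x₂² + (x₁-x₂)²b`.
Then `q = 1 + A + x₁²y₁ + My₂`, the first numerator is `1 + A - M` and the third is `M - x₁²c`,
so all three bounds follow from two estimates on `M`:
`M(1-c) ≤ 1`, because `b(1-c) ≤ c` makes `M(1-c)` at most a convex combination of `x₂²` and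
`(x₁-x₂)²`; and `M ≥ x₁²b/(1+b) ≥ x₁²c(1-c)`, the first inequality by minimising over `x₂`.
-/

namespace Stmt18

section IndexRatios

variable {m n d : ℝ}

theorem div_sub_add_one_le_div_sub_add_one (hm : 0 ≤ m) (hmn : m ≤ n) (hnd : n < d + 1) :
    m / (d - m + 1) ≤ n / (d - n + 1) := by
  rw [div_le_div_iff₀ (by linarith) (by linarith)]
  nlinarith

theorem div_sub_add_one_mul_one_sub_div_le (hm : 0 ≤ m) (hmd : m < d) :
    m / (d - m + 1) * (1 - m / d) ≤ m / d := by
  have hd : 0 < d := by linarith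
  have h : m / (d - m + 1) * (1 - m / d) = m / d * ((d - m) / (d - m + 1)) := by
    field_simp
  rw [h]
  refine mul_le_of_le_one_right (by positivity) ?_
  rw [div_le_one (by linarith)]
  linarith

end IndexRatios

section Quadratic

variable {x₁ x₂ b c : ℝ}

theorem mul_sq_le_one_add_mul_sq_add_sq_sub_mul (b x₁ x₂ : ℝ) :
    b * x₁ ^ 2 ≤ (1 + b) * (x₂ ^ 2 + (x₁ - x₂) ^ 2 * b) := by
  have h : (1 + b) * (x₂ ^ 2 + (x₁ - x₂) ^ 2 * b) - b * x₁ ^ 2 = ((1 + b) * x₂ - b * x₁) ^ 2 := by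
    ring
  linarith [sq_nonneg ((1 + b) * x₂ - b * x₁)]

theorem sq_mul_le_sq_add_sq_sub_mul (hc0 : 0 ≤ c) (hc1 : c ≤ 1) (hcb : c ≤ b) :
    x₁ ^ 2 * (c * (1 - c)) ≤ x₂ ^ 2 + (x₁ - x₂) ^ 2 * b := by
  have h1b : 0 < 1 + b := by linarith
  have hcb' : c * (1 - c) * (1 + b) ≤ b := by
    have h : 0 ≤ 1 - c * (1 - c) := by nlinarith
    nlinarith [mul_le_mul_of_nonneg_right hcb h, pow_nonneg hc0 3]
  refine le_of_mul_le_mul_left ?_ h1b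
  calc (1 + b) * (x₁ ^ 2 * (c * (1 - c))) = x₁ ^ 2 * (c * (1 - c) * (1 + b)) := by ring
    _ ≤ x₁ ^ 2 * b := mul_le_mul_of_nonneg_left hcb' (sq_nonneg x₁)
    _ ≤ (1 + b) * (x₂ ^ 2 + (x₁ - x₂) ^ 2 * b) := by
      linarith [mul_sq_le_one_add_mul_sq_add_sq_sub_mul b x₁ x₂]

theorem sq_add_sq_sub_mul_mul_one_sub_le_one (hx₂ : x₂ ^ 2 ≤ 1) (hx₁₂ : (x₁ - x₂) ^ 2 ≤ 1)
    (hc0 : 0 ≤ c) (hc1 : c ≤ 1) (hbc : b * (1 - c) ≤ c) :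
    (x₂ ^ 2 + (x₁ - x₂) ^ 2 * b) * (1 - c) ≤ 1 := by
  have h₂ := mul_le_mul_of_nonneg_right hx₂ (sub_nonneg.2 hc1)
  have h₁₂ := mul_le_mul_of_nonneg_left hbc (sq_nonneg (x₁ - x₂))
  have h₁₂' := mul_le_mul_of_nonneg_right hx₁₂ hc0
  linarith

end Quadratic

section Bounds

variable {s A M Y c e y₁ y₂ : ℝ}

theorem abs_one_add_sub_div_le_one_div_one_sub (hA : 0 ≤ A) (hY : 0 ≤ Y) (hM : 0 ≤ M)
    (he0 : 0 ≤ e) (he1 : e < 1) (hMe : M * (1 - e) ≤ 1) :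
    |1 + A - M| / (1 + A + Y) ≤ 1 / (1 - e) := by
  rw [div_le_div_iff₀ (by linarith) (by linarith), one_mul]
  rcases abs_cases (1 + A - M) with ⟨h, -⟩ | ⟨h, -⟩ <;> rw [h] <;> nlinarith

theorem div_le_one_div_one_add_add_mul {γ : ℝ} (hs0 : 0 ≤ s) (hs1 : s ≤ 1) (hA : 0 ≤ A)
    (hy₁ : 0 ≤ y₁) (hy₂ : 0 ≤ y₂) (hγ : 0 ≤ γ) (hsM : s * γ ≤ M) :
    s / (1 + A + (s * y₁ + M * y₂)) ≤ 1 / (1 + y₁ + y₂ * γ) := by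
  have hM : 0 ≤ M := (mul_nonneg hs0 hγ).trans hsM
  rw [div_le_div_iff₀ (by positivity) (by positivity), one_mul]
  nlinarith [mul_le_mul_of_nonneg_left hsM hy₂, mul_le_mul_of_nonneg_right hs1 hy₁]

theorem abs_sub_mul_div_le_one_div_mul (hs0 : 0 ≤ s) (hs1 : s ≤ 1) (hA : 0 ≤ A)
    (hy₁ : 0 ≤ y₁) (hy₂ : 0 ≤ y₂) (hc0 : 0 ≤ c) (hc1 : c < 1)
    (hsM : s * (c * (1 - c)) ≤ M) (hMc : M * (1 - c) ≤ 1) :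
    |M - s * c| / (1 + A + (s * y₁ + M * y₂)) ≤ 1 / ((1 - c) * (1 + y₂)) := by
  have hM : 0 ≤ M := (mul_nonneg hs0 (mul_nonneg hc0 (by linarith))).trans hsM
  have hN : |M - s * c| * (1 - c) ≤ 1 ∧ |M - s * c| * (1 - c) ≤ M := by
    rcases abs_cases (M - s * c) with ⟨h, -⟩ | ⟨h, -⟩ <;> rw [h] <;> constructor <;>
      nlinarith [mul_nonneg hs0 hc0]
  rw [div_le_div_iff₀ (by positivity) (by nlinarith), one_mul]
  nlinarith [mul_le_mul_of_nonneg_right hN.2 hy₂, mul_nonneg hs0 hy₁]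

end Bounds

theorem weight_bounds {a b c e x₁ x₂ y₁ y₂ : ℝ}
    (hx₁0 : 0 ≤ x₁) (hx₁1 : x₁ ≤ 1) (hx₂0 : 0 ≤ x₂) (hx₂1 : x₂ ≤ 1)
    (hy₁ : 0 ≤ y₁) (hy₂ : 0 ≤ y₂)
    (hc0 : 0 ≤ c) (hcb : c ≤ b) (hba : b ≤ a) (hce : c ≤ e) (he1 : e < 1)
    (hbc : b * (1 - c) ≤ c) :
    |(1 - x₂) ^ 2 * a + (x₂ - x₁) * (2 - x₁ - x₂) * b + 1 - x₂ ^ 2 - (x₁ - x₂) ^ 2 * b| /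
        ((1 - x₂) ^ 2 * a + (x₂ - x₁) * (2 - x₁ - x₂) * b
          + 1 + x₁ ^ 2 * y₁ + x₂ ^ 2 * y₂ + (x₁ - x₂) ^ 2 * b * y₂)
      ≤ 1 / (1 - e) ∧
    x₁ ^ 2 / ((1 - x₂) ^ 2 * a + (x₂ - x₁) * (2 - x₁ - x₂) * b
          + 1 + x₁ ^ 2 * y₁ + x₂ ^ 2 * y₂ + (x₁ - x₂) ^ 2 * b * y₂)
      ≤ 1 / (1 + y₁ + y₂ * c * (1 - c)) ∧
    1 / (1 + y₁ + y₂ * c * (1 - c)) ≤ 1 ∧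
    |x₂ ^ 2 - x₁ ^ 2 * c + (x₁ - x₂) ^ 2 * b| /
        ((1 - x₂) ^ 2 * a + (x₂ - x₁) * (2 - x₁ - x₂) * b
          + 1 + x₁ ^ 2 * y₁ + x₂ ^ 2 * y₂ + (x₁ - x₂) ^ 2 * b * y₂)
      ≤ 1 / ((1 - c) * (1 + y₂)) ∧
    1 / ((1 - c) * (1 + y₂)) ≤ 1 / (1 - c) := by
  have hc1 : c < 1 := hce.trans_lt he1
  have hx₁ : x₁ ^ 2 ≤ 1 := by nlinarith
  have hx₂ : x₂ ^ 2 ≤ 1 := by nlinarith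
  have hx₁₂ : (x₁ - x₂) ^ 2 ≤ 1 := by nlinarith
  have hγ : 0 ≤ c * (1 - c) := mul_nonneg hc0 (by linarith)
  set A := (1 - x₂) ^ 2 * a + (x₂ - x₁) * (2 - x₁ - x₂) * b with hA_def
  obtain ⟨M, hM_def⟩ : ∃ M, M = x₂ ^ 2 + (x₁ - x₂) ^ 2 * b := ⟨_, rfl⟩
  have hA : 0 ≤ A := by
    have h : A = (1 - x₂) ^ 2 * (a - b) + (1 - x₁) ^ 2 * b := by rw [hA_def]; ring
    rw [h]
    have := hc0.trans hcb
    have := sub_nonneg.2 hba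
    positivity
  have hM : 0 ≤ M := by rw [hM_def]; have := hc0.trans hcb; positivity
  have hMl : x₁ ^ 2 * (c * (1 - c)) ≤ M := hM_def ▸ sq_mul_le_sq_add_sq_sub_mul hc0 hc1.le hcb
  have hMu : M * (1 - c) ≤ 1 := hM_def ▸ sq_add_sq_sub_mul_mul_one_sub_le_one hx₂ hx₁₂ hc0 hc1.le hbc
  have hq : A + 1 + x₁ ^ 2 * y₁ + x₂ ^ 2 * y₂ + (x₁ - x₂) ^ 2 * b * y₂
      = 1 + A + (x₁ ^ 2 * y₁ + M * y₂) := by rw [hM_def]; ring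
  rw [hq]
  refine ⟨?_, ?_, ?_, ?_, ?_⟩
  · rw [show A + 1 - x₂ ^ 2 - (x₁ - x₂) ^ 2 * b = 1 + A - M by rw [hM_def]; ring]
    refine abs_one_add_sub_div_le_one_div_one_sub hA (by positivity) hM (hc0.trans hce) he1 ?_
    nlinarith
  · rw [mul_assoc y₂]
    exact div_le_one_div_one_add_add_mul (sq_nonneg x₁) hx₁ hA hy₁ hy₂ hγ hMl
  · rw [div_le_one (by positivity)]
    nlinarith
  · rw [show x₂ ^ 2 - x₁ ^ 2 * c + (x₁ - x₂) ^ 2 * b = M - x₁ ^ 2 * c by rw [hM_def]; ring]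
    exact abs_sub_mul_div_le_one_div_mul (sq_nonneg x₁) hx₁ hA hy₁ hy₂ hc0 hc1 hMl hMu
  · exact one_div_le_one_div_of_le (by linarith) (le_mul_of_one_le_right (by linarith) (by linarith))

theorem weight_inequalities_general (k₁ k₂ k d : ℕ)
    (hk₁ : 0 < k₁) (hkk : k₁ + k₂ = k) (hkd : k < d)
    (x₁ x₂ y₁ y₂ : ℝ)
    (hx₁0 : 0 ≤ x₁) (hx₁1 : x₁ ≤ 1) (hx₂0 : 0 ≤ x₂) (hx₂1 : x₂ ≤ 1)
    (hy₁ : 0 ≤ y₁) (hy₂ : 0 ≤ y₂)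
    (q : ℝ)
    (hq : q = (1 - x₂) ^ 2 * (k : ℝ) / ((d : ℝ) - (k : ℝ) + 1)
      + (x₂ - x₁) * (2 - x₁ - x₂) * (k₁ : ℝ) / ((d : ℝ) - (k₁ : ℝ) + 1)
      + 1 + x₁ ^ 2 * y₁ + x₂ ^ 2 * y₂
      + (x₁ - x₂) ^ 2 * ((k₁ : ℝ) / ((d : ℝ) - (k₁ : ℝ) + 1)) * y₂) :
    |(1 - x₂) ^ 2 * (k : ℝ) / ((d : ℝ) - (k : ℝ) + 1)
        + (x₂ - x₁) * (2 - x₁ - x₂) * (k₁ : ℝ) / ((d : ℝ) - (k₁ : ℝ) + 1)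
        + 1 - x₂ ^ 2 - (x₁ - x₂) ^ 2 * (k₁ : ℝ) / ((d : ℝ) - (k₁ : ℝ) + 1)| / q
      ≤ 1 / (1 - (k : ℝ) / (d : ℝ)) ∧
    x₁ ^ 2 / q
      ≤ 1 / (1 + y₁ + y₂ * ((k₁ : ℝ) / (d : ℝ)) * (1 - (k₁ : ℝ) / (d : ℝ))) ∧
    1 / (1 + y₁ + y₂ * ((k₁ : ℝ) / (d : ℝ)) * (1 - (k₁ : ℝ) / (d : ℝ))) ≤ 1 ∧
    |x₂ ^ 2 - x₁ ^ 2 * (k₁ : ℝ) / (d : ℝ)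
        + (x₁ - x₂) ^ 2 * (k₁ : ℝ) / ((d : ℝ) - (k₁ : ℝ) + 1)| / q
      ≤ 1 / ((1 - (k₁ : ℝ) / (d : ℝ)) * (1 + y₂)) ∧
    1 / ((1 - (k₁ : ℝ) / (d : ℝ)) * (1 + y₂)) ≤ 1 / (1 - (k₁ : ℝ) / (d : ℝ)) := by
  have hk₁' : (1 : ℝ) ≤ k₁ := by exact_mod_cast hk₁
  have hk₁k : (k₁ : ℝ) ≤ k := by exact_mod_cast (show k₁ ≤ k by omega)
  have hkd' : (k : ℝ) + 1 ≤ d := by exact_mod_cast hkd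
  have hd : (0 : ℝ) < d := by linarith
  simp only [mul_div_assoc] at hq ⊢
  subst hq
  exact weight_bounds hx₁0 hx₁1 hx₂0 hx₂1 hy₁ hy₂ (by positivity)
    (div_le_div_of_nonneg_left (by positivity) (by linarith) (by linarith))
    (div_sub_add_one_le_div_sub_add_one (by positivity) hk₁k (by linarith))
    (div_le_div_of_nonneg_right hk₁k hd.le) ((div_lt_one hd).2 (by linarith))
    (div_sub_add_one_mul_one_sub_div_le (by positivity) (by linarith))

/-- Deterministic weight inequalities (Lemma on the weights `q`): for `x₁, x₂ ∈ [0,1]`,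
`y₁, y₂ ≥ 0` and positive integers `k₁ + k₂ = k < d`, with
`q = (1-x₂)² k/(d-k+1) + (x₂-x₁)(2-x₁-x₂) k₁/(d-k₁+1) + 1 + x₁²y₁ + x₂²y₂
     + (x₁-x₂)² (k₁/(d-k₁+1)) y₂`,
the three stated ratio bounds hold. -/
theorem weight_inequalities (k₁ k₂ k d : ℕ)
    (hk₁ : 0 < k₁) (hk₂ : 0 < k₂) (hkk : k₁ + k₂ = k) (hkd : k < d)
    (x₁ x₂ y₁ y₂ : ℝ)
    (hx₁0 : 0 ≤ x₁) (hx₁1 : x₁ ≤ 1) (hx₂0 : 0 ≤ x₂) (hx₂1 : x₂ ≤ 1)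
    (hy₁ : 0 ≤ y₁) (hy₂ : 0 ≤ y₂)
    (q : ℝ)
    (hq : q = (1 - x₂) ^ 2 * (k : ℝ) / ((d : ℝ) - (k : ℝ) + 1)
      + (x₂ - x₁) * (2 - x₁ - x₂) * (k₁ : ℝ) / ((d : ℝ) - (k₁ : ℝ) + 1)
      + 1 + x₁ ^ 2 * y₁ + x₂ ^ 2 * y₂
      + (x₁ - x₂) ^ 2 * ((k₁ : ℝ) / ((d : ℝ) - (k₁ : ℝ) + 1)) * y₂) :
    |(1 - x₂) ^ 2 * (k : ℝ) / ((d : ℝ) - (k : ℝ) + 1)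
        + (x₂ - x₁) * (2 - x₁ - x₂) * (k₁ : ℝ) / ((d : ℝ) - (k₁ : ℝ) + 1)
        + 1 - x₂ ^ 2 - (x₁ - x₂) ^ 2 * (k₁ : ℝ) / ((d : ℝ) - (k₁ : ℝ) + 1)| / q
      ≤ 1 / (1 - (k : ℝ) / (d : ℝ)) ∧
    x₁ ^ 2 / q
      ≤ 1 / (1 + y₁ + y₂ * ((k₁ : ℝ) / (d : ℝ)) * (1 - (k₁ : ℝ) / (d : ℝ))) ∧
    1 / (1 + y₁ + y₂ * ((k₁ : ℝ) / (d : ℝ)) * (1 - (k₁ : ℝ) / (d : ℝ))) ≤ 1 ∧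
    |x₂ ^ 2 - x₁ ^ 2 * (k₁ : ℝ) / (d : ℝ)
        + (x₁ - x₂) ^ 2 * (k₁ : ℝ) / ((d : ℝ) - (k₁ : ℝ) + 1)| / q
      ≤ 1 / ((1 - (k₁ : ℝ) / (d : ℝ)) * (1 + y₂)) ∧
    1 / ((1 - (k₁ : ℝ) / (d : ℝ)) * (1 + y₂)) ≤ 1 / (1 - (k₁ : ℝ) / (d : ℝ)) :=
  weight_inequalities_general k₁ k₂ k d hk₁ hkk hkd x₁ x₂ y₁ y₂ hx₁0 hx₁1 hx₂0 hx₂1 hy₁ hy₂ q hq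

end Stmt18
end
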